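/- arXiv:1004.2752 — 5 statements merged into one kernel-verified Lean document; each statement's English description precedes it below -/
import Mathlib

section
/- Lemma 3.2 (abstract form, with exactly the hypotheses used in its proof): Let (Ω, F, P) be a probability space. For every integer ℓ ≥ 1 let A_ℓ, B_ℓ, C_ℓ be sub-σ-algebras of F such that the triple (A_ℓ, B_ℓ, C_ℓ) is independent under P, the family (A_ℓ)_{ℓ≥1} is nondecreasing, the family (H_ℓ)_{ℓ≥1} with H_ℓ := B_ℓ ∨ C_ℓ is nonincreasing, every event in ⋂_{ℓ≥1} H_ℓ has probability 0 or 1, and σ(⋃_{m≥1} A_m) ⊆ A_ℓ ∨ B_ℓ ∨ C_ℓ for every ℓ. For every ℓ let τ_ℓ : Ω → Ω be measurable and measure preserving (P ∘ τ_ℓ⁻¹ = P) such that: f ∘ τ_ℓ is B_ℓ-measurable for every bounded A_ℓ-measurable f : Ω → ℝ; f ∘ τ_ℓ is A_ℓ-measurable for every bounded B_ℓ-measurable f; and f ∘ τ_ℓ = f P-a.s. for every bounded C_ℓ-measurable f. If ζ is a bounded random variable measurable with respect to σ(⋃_{m≥1} A_m) and ζ ∘ τ_ℓ = ζ P-a.s.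 for every ℓ ≥ 1, then ζ = E[ζ] P-a.s., i.e. ζ is almost surely constant. -/
/-!
Write `H ℓ = B ℓ ⊔ C ℓ` and `‖·‖` for the `L²(P)` norm. Since `τ ℓ` preserves `P`, fixes `ζ` and
carries `A ℓ`-measurable functions to `B ℓ`-measurable ones,
`‖E[ζ|A ℓ]‖² = ⟨E[ζ|A ℓ], ζ⟩ = ⟨E[ζ|A ℓ] ∘ τ ℓ, ζ⟩ = ⟨E[ζ|A ℓ] ∘ τ ℓ, E[ζ|H ℓ]⟩`,
so `‖E[ζ|A ℓ]‖ ≤ ‖E[ζ|H ℓ]‖`. By Lévy's upward theorem the left side tends to `‖ζ‖`, while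
`‖E[ζ|H ℓ]‖` decreases in `ℓ`; hence `‖E[ζ|H k]‖ ≥ ‖ζ‖` for every `k`, and by Pythagoras
`ζ = E[ζ|H k]` a.s. A limsup of these versions is measurable for `⨅ k, H k`, on which `P` is
trivial, so `ζ` is a.s. constant.
-/

open MeasureTheory ProbabilityTheory Filter Topology

namespace MeasureTheory

variable {Ω : Type*} {m m₁ m₂ m0 : MeasurableSpace Ω} {P : Measure Ω}

lemma MeasurePreserving.integral_comp_of_aestronglyMeasurable {Ω' E : Type*}
    [MeasurableSpace Ω'] [NormedAddCommGroup E] [NormedSpace ℝ E] {Q : Measure Ω'} {τ : Ω → Ω'}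
    (hτ : MeasurePreserving τ P Q) {h : Ω' → E} (hh : AEStronglyMeasurable h Q) :
    ∫ ω, h (τ ω) ∂P = ∫ ω', h ω' ∂Q := by
  rw [← hτ.map_eq] at hh ⊢
  exact (integral_map hτ.aemeasurable hh).symm

lemma integral_sub_sq {u v : Ω → ℝ} (hu : MemLp u 2 P) (hv : MemLp v 2 P) :
    ∫ ω, (u ω - v ω) ^ 2 ∂P
      = ∫ ω, u ω ^ 2 ∂P - 2 * ∫ ω, u ω * v ω ∂P + ∫ ω, v ω ^ 2 ∂P := by
  have huv : Integrable (fun ω => u ω * v ω) P := hu.integrable_mul hv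
  have h2uv : Integrable (fun ω => u ω ^ 2 - 2 * (u ω * v ω)) P :=
    hu.integrable_sq.sub (huv.const_mul 2)
  have hexpand : ∀ ω, (u ω - v ω) ^ 2 = u ω ^ 2 - 2 * (u ω * v ω) + v ω ^ 2 := fun ω => by ring
  simp_rw [hexpand]
  rw [integral_add h2uv hv.integrable_sq, integral_sub hu.integrable_sq (huv.const_mul 2),
    integral_const_mul]

lemma integral_mul_condExp (hm : m ≤ m0) [SigmaFinite (P.trim hm)] {f g : Ω → ℝ}
    (hg : AEStronglyMeasurable[m] g P) (hgf : Integrable (g * f) P) (hf : Integrable f P) :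
    ∫ ω, g ω * P[f|m] ω ∂P = ∫ ω, g ω * f ω ∂P := by
  calc ∫ ω, g ω * P[f|m] ω ∂P = ∫ ω, P[g * f|m] ω ∂P :=
        integral_congr_ae (condExp_mul_of_aestronglyMeasurable_left hg hgf hf).symm
    _ = ∫ ω, g ω * f ω ∂P := integral_condExp hm

lemma integral_sq_sub_condExp [IsFiniteMeasure P] (hm : m ≤ m0) {f : Ω → ℝ}
    (hf : MemLp f 2 P) :
    ∫ ω, (f ω - P[f|m] ω) ^ 2 ∂P = ∫ ω, f ω ^ 2 ∂P - ∫ ω, P[f|m] ω ^ 2 ∂P := by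
  have hcf : MemLp (P[f|m]) 2 P := hf.condExp one_le_two
  have hpair : ∫ ω, f ω * P[f|m] ω ∂P = ∫ ω, P[f|m] ω ^ 2 ∂P := by
    simp_rw [mul_comm (f _), sq]
    exact (integral_mul_condExp hm stronglyMeasurable_condExp.aestronglyMeasurable
      (hcf.integrable_mul hf) (hf.integrable one_le_two)).symm
  rw [integral_sub_sq hf hcf, hpair]
  ring

lemma integral_sq_condExp_le [IsFiniteMeasure P] (hm : m ≤ m0) {f : Ω → ℝ} (hf : MemLp f 2 P) :
    ∫ ω, P[f|m] ω ^ 2 ∂P ≤ ∫ ω, f ω ^ 2 ∂P := by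
  have hpyth := integral_sq_sub_condExp hm hf
  have hnonneg : 0 ≤ ∫ ω, (f ω - P[f|m] ω) ^ 2 ∂P := integral_nonneg fun ω => sq_nonneg _
  linarith

lemma integral_sq_condExp_le_of_le [IsFiniteMeasure P] (h₁₂ : m₁ ≤ m₂) (hm₂ : m₂ ≤ m0)
    {f : Ω → ℝ} (hf : MemLp f 2 P) :
    ∫ ω, P[f|m₁] ω ^ 2 ∂P ≤ ∫ ω, P[f|m₂] ω ^ 2 ∂P := by
  calc ∫ ω, P[f|m₁] ω ^ 2 ∂P = ∫ ω, P[P[f|m₂]|m₁] ω ^ 2 ∂P :=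
        integral_congr_ae ((condExp_condExp_of_le h₁₂ hm₂).symm.fun_comp (· ^ 2))
    _ ≤ ∫ ω, P[f|m₂] ω ^ 2 ∂P := integral_sq_condExp_le (h₁₂.trans hm₂) (hf.condExp one_le_two)

lemma condExp_ae_eq_self_of_integral_sq_le [IsFiniteMeasure P] (hm : m ≤ m0) {f : Ω → ℝ}
    (hf : MemLp f 2 P) (h : ∫ ω, f ω ^ 2 ∂P ≤ ∫ ω, P[f|m] ω ^ 2 ∂P) : P[f|m] =ᵐ[P] f := by
  have hint : Integrable (fun ω => (f ω - P[f|m] ω) ^ 2) P :=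
    (hf.sub (hf.condExp one_le_two)).integrable_sq
  have hzero : ∫ ω, (f ω - P[f|m] ω) ^ 2 ∂P = 0 :=
    le_antisymm (by linarith [integral_sq_sub_condExp hm hf])
      (integral_nonneg fun ω => sq_nonneg _)
  filter_upwards [(integral_eq_zero_iff_of_nonneg (fun ω => sq_nonneg _) hint).1 hzero]
    with ω hω
  exact (sub_eq_zero.1 (pow_eq_zero_iff two_ne_zero |>.1 hω)).symm

lemma exists_bounded_ae_eq_condExp {f : Ω → ℝ} {M : ℝ} (hf : ∀ ω, |f ω| ≤ M) :
    ∃ g : Ω → ℝ, Measurable[m] g ∧ (∀ ω, |g ω| ≤ M) ∧ g =ᵐ[P] P[f|m] := by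
  refine ⟨fun ω => max (-M) (min (P[f|m] ω) M), ?_, fun ω => ?_, ?_⟩
  · exact measurable_const.max (stronglyMeasurable_condExp.measurable.min measurable_const)
  · have hM : 0 ≤ M := (abs_nonneg _).trans (hf ω)
    exact abs_le.2 ⟨le_max_left _ _, max_le (by linarith) (min_le_right _ _)⟩
  · filter_upwards [ae_bdd_abs_condExp_of_ae_bdd_abs (m := m) (ae_of_all P hf)] with ω hω
    rw [min_eq_left (abs_le.1 hω).2, max_eq_right (abs_le.1 hω).1]

lemma memLp_two_of_bound [IsFiniteMeasure P] {f : Ω → ℝ} (hf : Measurable f) {M : ℝ}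
    (hfM : ∀ ω, |f ω| ≤ M) : MemLp f 2 P :=
  MemLp.of_bound hf.aestronglyMeasurable M (ae_of_all P hfM)

lemma integral_sq_condExp_le_of_comp_measurable [IsFiniteMeasure P] (hm₁ : m₁ ≤ m0)
    (hm₂ : m₂ ≤ m0) {τ : Ω → Ω} (hτ : MeasurePreserving τ P P)
    (hswap : ∀ g : Ω → ℝ, (∃ M, ∀ ω, |g ω| ≤ M) → Measurable[m₁] g → Measurable[m₂] (g ∘ τ))
    {f : Ω → ℝ} {M : ℝ} (hfM : ∀ ω, |f ω| ≤ M) (hf : Measurable f) (hfτ : f ∘ τ =ᵐ[P] f) :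
    ∫ ω, P[f|m₁] ω ^ 2 ∂P ≤ ∫ ω, P[f|m₂] ω ^ 2 ∂P := by
  obtain ⟨g, hg, hgM, hgf⟩ := exists_bounded_ae_eq_condExp (m := m₁) (P := P) hfM
  have hu : Measurable[m₂] (g ∘ τ) := hswap g ⟨M, hgM⟩ hg
  have hfL2 : MemLp f 2 P := memLp_two_of_bound hf hfM
  have hgL2 : MemLp g 2 P := memLp_two_of_bound (hg.mono hm₁ le_rfl) hgM
  have huL2 : MemLp (g ∘ τ) 2 P := memLp_two_of_bound (hu.mono hm₂ le_rfl) fun ω => hgM _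
  have hcL2 : MemLp (P[f|m₂]) 2 P := hfL2.condExp one_le_two
  have hfi : Integrable f P := hfL2.integrable one_le_two
  have hg_sq : ∫ ω, P[f|m₁] ω ^ 2 ∂P = ∫ ω, g ω ^ 2 ∂P :=
    integral_congr_ae (hgf.symm.fun_comp (· ^ 2))
  have hgf_pair : ∫ ω, g ω * f ω ∂P = ∫ ω, g ω ^ 2 ∂P := by
    rw [← integral_mul_condExp hm₁ hg.aestronglyMeasurable (hgL2.integrable_mul hfL2) hfi]
    refine integral_congr_ae ?_
    filter_upwards [hgf] with ω hω
    rw [← hω, sq]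
  have hu_pair : ∫ ω, g (τ ω) * P[f|m₂] ω ∂P = ∫ ω, g ω * f ω ∂P :=
    calc ∫ ω, g (τ ω) * P[f|m₂] ω ∂P = ∫ ω, g (τ ω) * f ω ∂P :=
          integral_mul_condExp hm₂ hu.aestronglyMeasurable (huL2.integrable_mul hfL2) hfi
      _ = ∫ ω, g (τ ω) * f (τ ω) ∂P := by
          refine integral_congr_ae ?_
          filter_upwards [hfτ] with ω hω
          rw [← hω, Function.comp_apply]
      _ = ∫ ω, g ω * f ω ∂P :=
          hτ.integral_comp_of_aestronglyMeasurable (h := fun ω => g ω * f ω)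
            (hgL2.integrable_mul hfL2).1
  have hu_sq : ∫ ω, g (τ ω) ^ 2 ∂P = ∫ ω, g ω ^ 2 ∂P :=
    hτ.integral_comp_of_aestronglyMeasurable hgL2.integrable_sq.1
  have hdist := integral_sub_sq huL2 hcL2
  have hnonneg : 0 ≤ ∫ ω, ((g ∘ τ) ω - P[f|m₂] ω) ^ 2 ∂P := integral_nonneg fun ω => sq_nonneg _
  simp only [Function.comp_apply] at hdist hnonneg
  -- `hdist` reads `‖g ∘ τ - P[f|m₂]‖² = ‖P[f|m₂]‖² - ‖g‖²`
  linarith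

lemma tendsto_integral_sq_condExp [IsFiniteMeasure P] (ℱ : Filtration ℕ m0) {f : Ω → ℝ} {M : ℝ}
    (hfM : ∀ ω, |f ω| ≤ M) (hf : StronglyMeasurable[⨆ n, ℱ n] f) :
    Tendsto (fun n => ∫ ω, P[f|ℱ n] ω ^ 2 ∂P) atTop (𝓝 (∫ ω, f ω ^ 2 ∂P)) := by
  have hfi : Integrable f P :=
    (memLp_two_of_bound (hf.measurable.mono (iSup_le ℱ.le) le_rfl) hfM).integrable one_le_two
  refine tendsto_integral_of_dominated_convergence (fun _ => M ^ 2)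
    (fun n => (stronglyMeasurable_condExp.mono (ℱ.le n)).aestronglyMeasurable.pow 2)
    (integrable_const _) (fun n => ?_) ?_
  · filter_upwards [ae_bdd_abs_condExp_of_ae_bdd_abs (m := ℱ n) (ae_of_all P hfM)] with ω hω
    rw [norm_pow, Real.norm_eq_abs]
    exact pow_le_pow_left₀ (abs_nonneg _) hω 2
  · filter_upwards [hfi.tendsto_ae_condExp hf] with ω hω
    exact hω.pow 2

lemma exists_measurable_iInf_ae_eq {m : ℕ → MeasurableSpace Ω} (hm : Antitone m) {f : Ω → ℝ}
    {g : ℕ → Ω → ℝ} (hg : ∀ k, Measurable[m k] (g k)) (hgf : ∀ k, g k =ᵐ[P] f) :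
    ∃ h : Ω → ℝ, Measurable[⨅ k, m k] h ∧ h =ᵐ[P] f := by
  refine ⟨fun ω => limsup (fun k => g k ω) atTop, fun s hs => ?_, ?_⟩
  · rw [MeasurableSpace.measurableSet_iInf]
    intro j
    have hshift : (fun ω => limsup (fun k => g k ω) atTop)
        = fun ω => limsup (fun k => g (k + j) ω) atTop :=
      funext fun ω => (limsup_nat_add (fun k => g k ω) j).symm
    rw [hshift]
    exact Measurable.limsup (fun k => (hg (k + j)).mono (hm (Nat.le_add_left j k)) le_rfl) hs
  · filter_upwards [ae_all_iff.2 hgf] with ω hω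
    simp [hω]

lemma indep_self_of_measure_eq_zero_or_one [IsProbabilityMeasure P] (hm : m ≤ m0)
    (h01 : ∀ s, MeasurableSet[m] s → P s = 0 ∨ P s = 1) : Indep m m P := by
  refine (Indep_iff m m P).2 fun s t hs ht => ?_
  rcases h01 s hs with h | h
  · rw [h, zero_mul]
    exact measure_mono_null Set.inter_subset_left h
  · rw [h, one_mul, Set.inter_comm]
    exact measure_inter_conull ((prob_compl_eq_zero_iff (hm s hs)).2 h)

lemma ae_eq_integral_of_measure_eq_zero_or_one [IsProbabilityMeasure P] (hm : m ≤ m0)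
    (h01 : ∀ s, MeasurableSet[m] s → P s = 0 ∨ P s = 1) {f : Ω → ℝ}
    (hf : StronglyMeasurable[m] f) (hfi : Integrable f P) :
    f =ᵐ[P] fun _ => ∫ ω, f ω ∂P := by
  have := condExp_indep_eq hm hm hf (indep_self_of_measure_eq_zero_or_one hm h01)
  rwa [condExp_of_stronglyMeasurable hm hf hfi] at this

end MeasureTheory

theorem invariant_under_swaps_is_constant_general
    {Ω : Type*} [m0 : MeasurableSpace Ω] (P : Measure Ω) [IsProbabilityMeasure P]
    (A B C : ℕ → MeasurableSpace Ω)
    (hA : ∀ ℓ, A ℓ ≤ m0) (hB : ∀ ℓ, B ℓ ≤ m0) (hC : ∀ ℓ, C ℓ ≤ m0)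
    (hAmono : Monotone A)
    (hHanti : Antitone (fun ℓ => B ℓ ⊔ C ℓ))
    (htail : ∀ s : Set Ω, MeasurableSet[⨅ ℓ, B ℓ ⊔ C ℓ] s → P s = 0 ∨ P s = 1)
    (τ : ℕ → Ω → Ω)
    (hτpres : ∀ ℓ, @MeasurePreserving Ω Ω m0 m0 (τ ℓ) P P)
    (hAB : ∀ ℓ, ∀ f : Ω → ℝ, (∃ M, ∀ ω, |f ω| ≤ M) → Measurable[A ℓ] f →
      Measurable[B ℓ] (f ∘ τ ℓ))
    (ζ : Ω → ℝ)
    (hζbdd : ∃ M, ∀ ω, |ζ ω| ≤ M)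
    (hζmeas : Measurable[⨆ k, A k] ζ)
    (hζinv : ∀ ℓ, ζ ∘ τ ℓ =ᵐ[P] ζ) :
    ζ =ᵐ[P] fun _ => ∫ x, ζ x ∂P := by
  obtain ⟨M, hM⟩ := hζbdd
  have hH : ∀ ℓ, B ℓ ⊔ C ℓ ≤ m0 := fun ℓ => sup_le (hB ℓ) (hC ℓ)
  have hζm : Measurable ζ := hζmeas.mono (iSup_le hA) le_rfl
  have hζL2 : MemLp ζ 2 P := memLp_two_of_bound hζm hM
  have hAH : ∀ ℓ, ∫ ω, P[ζ|A ℓ] ω ^ 2 ∂P ≤ ∫ ω, P[ζ|B ℓ ⊔ C ℓ] ω ^ 2 ∂P := fun ℓ =>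
    integral_sq_condExp_le_of_comp_measurable (hA ℓ) (hH ℓ) (hτpres ℓ)
      (fun f hf hfm => (hAB ℓ f hf hfm).mono le_sup_left le_rfl) hM hζm (hζinv ℓ)
  have hlim := tendsto_integral_sq_condExp (P := P) ⟨A, hAmono, hA⟩ hM hζmeas.stronglyMeasurable
  have hζH : ∀ k, P[ζ|B k ⊔ C k] =ᵐ[P] ζ := fun k =>
    condExp_ae_eq_self_of_integral_sq_le (hH k) hζL2 <|
      le_of_tendsto hlim <| eventually_atTop.2 ⟨k, fun ℓ hkℓ =>
        (hAH ℓ).trans (integral_sq_condExp_le_of_le (hHanti hkℓ) (hH k) hζL2)⟩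
  obtain ⟨g, hg, hgζ⟩ :=
    exists_measurable_iInf_ae_eq hHanti (fun k => stronglyMeasurable_condExp.measurable) hζH
  have hgi : Integrable g P := (hζL2.integrable one_le_two).congr hgζ.symm
  have hgc := ae_eq_integral_of_measure_eq_zero_or_one ((iInf_le _ 0).trans (hH 0)) htail
    hg.stronglyMeasurable hgi
  rw [integral_congr_ae hgζ] at hgc
  exact hgζ.symm.trans hgc

/-- Lemma 3.2 (abstract form): let `(A ℓ, B ℓ, C ℓ)` be independent triples of
sub-σ-algebras with `(A ℓ)` nondecreasing, `(B ℓ ⊔ C ℓ)` nonincreasing with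
trivial tail, and `σ(⋃ A m) ⊆ A ℓ ⊔ B ℓ ⊔ C ℓ`. If each `τ ℓ` is measure
preserving, swaps bounded `A ℓ`- and `B ℓ`-measurable functions, and fixes
bounded `C ℓ`-measurable functions a.s., then every bounded
`σ(⋃ A m)`-measurable `ζ` with `ζ ∘ τ ℓ = ζ` a.s. for all `ℓ` is a.s. constant,
equal to its expectation. -/
theorem invariant_under_swaps_is_constant
    {Ω : Type*} [m0 : MeasurableSpace Ω] (P : Measure Ω) [IsProbabilityMeasure P]
    (A B C : ℕ → MeasurableSpace Ω)
    (hA : ∀ ℓ, A ℓ ≤ m0) (hB : ∀ ℓ, B ℓ ≤ m0) (hC : ∀ ℓ, C ℓ ≤ m0)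
    (hindep : ∀ ℓ, iIndep ![A ℓ, B ℓ, C ℓ] P)
    (hAmono : Monotone A)
    (hHanti : Antitone (fun ℓ => B ℓ ⊔ C ℓ))
    (htail : ∀ s : Set Ω, MeasurableSet[⨅ ℓ, B ℓ ⊔ C ℓ] s → P s = 0 ∨ P s = 1)
    (hgen : ∀ ℓ, (⨆ k, A k) ≤ A ℓ ⊔ B ℓ ⊔ C ℓ)
    (τ : ℕ → Ω → Ω)
    (hτmeas : ∀ ℓ, @Measurable Ω Ω m0 m0 (τ ℓ))
    (hτpres : ∀ ℓ, @MeasurePreserving Ω Ω m0 m0 (τ ℓ) P P)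
    (hAB : ∀ ℓ, ∀ f : Ω → ℝ, (∃ M, ∀ ω, |f ω| ≤ M) → Measurable[A ℓ] f →
      Measurable[B ℓ] (f ∘ τ ℓ))
    (hBA : ∀ ℓ, ∀ f : Ω → ℝ, (∃ M, ∀ ω, |f ω| ≤ M) → Measurable[B ℓ] f →
      Measurable[A ℓ] (f ∘ τ ℓ))
    (hCfix : ∀ ℓ, ∀ f : Ω → ℝ, (∃ M, ∀ ω, |f ω| ≤ M) → Measurable[C ℓ] f →
      f ∘ τ ℓ =ᵐ[P] f)
    (ζ : Ω → ℝ)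
    (hζbdd : ∃ M, ∀ ω, |ζ ω| ≤ M)
    (hζmeas : Measurable[⨆ k, A k] ζ)
    (hζinv : ∀ ℓ, ζ ∘ τ ℓ =ᵐ[P] ζ) :
    ζ =ᵐ[P] fun _ => ∫ x, ζ x ∂P :=
  invariant_under_swaps_is_constant_general (m0 := m0) P A B C hA hB hC hAmono hHanti htail τ hτpres
    hAB ζ hζbdd hζmeas hζinv
end

section
/- Conditional expectation identity under a swapping measure-preserving transformation (proved inside Lemma 3.2): Let (Ω, F, P) be a probability space and A, B, C sub-σ-algebras of F such that the triple (A, B, C) is independent under P. Let τ : Ω → Ω be measurable and measure preserving (P ∘ τ⁻¹ = P) such that: f ∘ τ is B-measurable for every bounded A-measurable f : Ω → ℝ; f ∘ τ is A-measurable for every bounded B-measurable f; and f ∘ τ = f P-a.s. for every bounded C-measurable f. Then for every P-integrable θ : Ω → ℝ measurable with respect to A ∨ B ∨ C one has E[θ ∘ τ | B ∨ C] = E[θ | A ∨ C] ∘ τ, P-almost surely. -/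
/-
Both sides are linear in `θ` and are 2-Lipschitz for the `L¹` norm, so by a π-λ argument and
density of simple functions it suffices to treat `θ = 1_{a ∩ b ∩ c}` with `a ∈ A`, `b ∈ B`,
`c ∈ C`. Since `τ⁻¹` carries `A`-sets to `B`-sets, `B`-sets to `A`-sets and fixes `C`-sets up to
null sets, `θ ∘ τ = 1_{τ⁻¹a ∩ c} · 1_{τ⁻¹b}` a.s., a `B ∨ C`-measurable factor times an
`A`-measurable one, independent of `B ∨ C`; hence `E[θ ∘ τ | B ∨ C] = P(b) 1_{τ⁻¹a ∩ c}`.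
In the same way `E[θ | A ∨ C] = P(b) 1_{a ∩ c}`, whose composition with `τ` is a.s. the same.
-/

open MeasureTheory ProbabilityTheory Filter Topology

theorem ProbabilityTheory.iIndep.indep_sup {Ω ι : Type*} {m0 : MeasurableSpace Ω} {μ : Measure Ω}
    {m : ι → MeasurableSpace Ω} (h : iIndep m μ) (hle : ∀ i, m i ≤ m0) {i j k : ι}
    (hij : i ≠ j) (hik : i ≠ k) : Indep (m i) (m j ⊔ m k) μ := by
  have h_ST := indep_iSup_of_disjoint hle h (S := {i}) (T := {j, k}) (by simp [hij, hik])
  rwa [iSup_singleton, iSup_insert, iSup_singleton] at h_ST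

theorem measurable_of_forall_bounded_measurable_comp {α β : Type*} {mα : MeasurableSpace α}
    {mβ : MeasurableSpace β} {τ : α → β}
    (h : ∀ f : β → ℝ, (∃ M, ∀ y, |f y| ≤ M) → Measurable f → Measurable (f ∘ τ)) :
    Measurable τ := by
  intro s hs
  have h_one := h (s.indicator 1) ⟨1, fun y => by by_cases hy : y ∈ s <;> simp [hy]⟩
    (measurable_one.indicator hs) (measurableSet_singleton 1)
  convert h_one using 1
  ext x
  by_cases hx : τ x ∈ s <;> simp [hx]

theorem preimage_ae_eq_of_forall_bounded_comp_ae_eq {Ω : Type*} {m m0 : MeasurableSpace Ω}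
    {P : Measure Ω} {τ : Ω → Ω}
    (h : ∀ f : Ω → ℝ, (∃ M, ∀ ω, |f ω| ≤ M) → Measurable[m] f → f ∘ τ =ᵐ[P] f)
    {s : Set Ω} (hs : MeasurableSet[m] s) : τ ⁻¹' s =ᵐ[P] s := by
  have h_one := (h (s.indicator 1) ⟨1, fun y => by by_cases hy : y ∈ s <;> simp [hy]⟩
    (measurable_const.indicator hs)).preimage {1}
  have h_preimage : ∀ t : Set Ω, t.indicator (1 : Ω → ℝ) ⁻¹' {1} = t := fun t => by
    ext x
    by_cases hx : x ∈ t <;> simp [hx]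
  rw [Set.preimage_comp, h_preimage] at h_one
  exact h_one

theorem IsPiSystem.image2_inter_measurableSet {α : Type*} {p : Set (Set α)} (hp : IsPiSystem p)
    (m : MeasurableSpace α) : IsPiSystem (Set.image2 (· ∩ ·) p {t | MeasurableSet[m] t}) := by
  rintro _ ⟨a, ha, b, hb, rfl⟩ _ ⟨a', ha', b', hb', rfl⟩ hne
  rw [Set.inter_inter_inter_comm] at hne ⊢
  exact Set.mem_image2_of_mem (hp a ha a' ha' hne.left) (MeasurableSet.inter hb hb')

theorem generateFrom_image2_inter_measurableSet {α : Type*} {p : Set (Set α)}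
    {m : MeasurableSpace α} (hp : Set.univ ∈ p) :
    MeasurableSpace.generateFrom (Set.image2 (· ∩ ·) p {t | MeasurableSet[m] t}) =
      MeasurableSpace.generateFrom p ⊔ m := by
  refine le_antisymm (MeasurableSpace.generateFrom_le ?_) (sup_le ?_ ?_)
  · rintro _ ⟨a, ha, b, hb, rfl⟩
    exact (le_sup_left (b := m) _ (MeasurableSpace.measurableSet_generateFrom ha)).inter
      (le_sup_right (a := MeasurableSpace.generateFrom p) _ hb)
  · exact MeasurableSpace.generateFrom_mono fun a ha => ⟨a, ha, Set.univ, .univ, Set.inter_univ a⟩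
  · exact fun b hb =>
      MeasurableSpace.measurableSet_generateFrom ⟨Set.univ, hp, b, hb, Set.univ_inter b⟩

theorem condExp_indicator_inter_of_indep {Ω : Type*} {m m' m0 : MeasurableSpace Ω}
    {P : Measure Ω} [IsFiniteMeasure P] (hm : m ≤ m0) (hm' : m' ≤ m0) (hind : Indep m' m P)
    {s t : Set Ω} (hs : MeasurableSet[m] s) (ht : MeasurableSet[m'] t) :
    P[(s ∩ t).indicator 1|m] =ᵐ[P] s.indicator fun _ => P.real t :=
  calc P[(s ∩ t).indicator 1|m] = P[s.indicator 1 * t.indicator 1|m] := by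
        rw [Set.inter_indicator_one]
    _ =ᵐ[P] s.indicator 1 * P[t.indicator 1|m] := by
        refine condExp_mul_of_stronglyMeasurable_left (stronglyMeasurable_one.indicator hs) ?_
          ((integrable_const 1).indicator (hm' _ ht))
        rw [← Set.inter_indicator_one]
        exact (integrable_const 1).indicator ((hm _ hs).inter (hm' _ ht))
    _ =ᵐ[P] s.indicator (1 : Ω → ℝ) * fun _ => P.real t := by
        filter_upwards [condExp_indep_eq (f := t.indicator (1 : Ω → ℝ)) hm' hm
          (stronglyMeasurable_one.indicator ht) hind] with x hx
        rw [Pi.mul_apply, hx, integral_indicator_one (hm' _ ht)]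
        rfl
    _ = s.indicator fun _ => P.real t := by
        ext x
        by_cases hx : x ∈ s <;> simp [hx]

theorem tendsto_eLpNorm_indicator_sub_indicator_iUnion {Ω : Type*} {m0 : MeasurableSpace Ω}
    {P : Measure Ω} [IsFiniteMeasure P] {s : ℕ → Set Ω}
    (hs : ∀ n, MeasurableSet (s n)) (hmono : Monotone s) :
    Tendsto (fun n => eLpNorm ((s n).indicator (1 : Ω → ℝ) - (⋃ n, s n).indicator 1) 1 P) atTop
      (𝓝 0) := by
  have hP : ∀ n, eLpNorm ((s n).indicator (1 : Ω → ℝ) - (⋃ n, s n).indicator 1) 1 P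
      = P (⋃ n, s n) - P (s n) := fun n => by
    rw [eLpNorm_indicator_sub_indicator, symmDiff_of_le (Set.subset_iUnion s n),
      ← measure_sdiff (Set.subset_iUnion s n) (hs n).nullMeasurableSet (measure_ne_top P _)]
    exact (eLpNorm_indicator_const (c := (1 : ℝ)) ((MeasurableSet.iUnion hs).diff (hs n))
      one_ne_zero ENNReal.one_ne_top).trans (by simp)
  simp_rw [hP]
  simpa using ENNReal.Tendsto.sub tendsto_const_nhds (tendsto_measure_iUnion_atTop (μ := P) hmono)
    (Or.inl (measure_ne_top P (⋃ n, s n)))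

section

variable {Ω : Type*} {A B C m m₁ m₂ m0 : MeasurableSpace Ω} {P : Measure Ω} {τ : Ω → Ω}
  {f g : Ω → ℝ}

def IntertwinesCondExp (P : Measure Ω) (τ : Ω → Ω) (m₁ m₂ : MeasurableSpace Ω) (f : Ω → ℝ) :
    Prop :=
  P[f ∘ τ|m₁] =ᵐ[P] P[f|m₂] ∘ τ

theorem eLpNorm_condExp_comp_sub_comp_condExp_le (hτ : MeasurePreserving τ P P)
    (hf : AEStronglyMeasurable f P) :
    eLpNorm (P[f ∘ τ|m₁] - P[f|m₂] ∘ τ) 1 P ≤ 2 * eLpNorm f 1 P :=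
  calc eLpNorm (P[f ∘ τ|m₁] - P[f|m₂] ∘ τ) 1 P
      ≤ eLpNorm (P[f ∘ τ|m₁]) 1 P + eLpNorm (P[f|m₂] ∘ τ) 1 P :=
        eLpNorm_sub_le integrable_condExp.aestronglyMeasurable
          (hτ.integrable_comp_of_integrable integrable_condExp).aestronglyMeasurable le_rfl
    _ = eLpNorm (P[f ∘ τ|m₁]) 1 P + eLpNorm (P[f|m₂]) 1 P := by
        rw [eLpNorm_comp_measurePreserving integrable_condExp.aestronglyMeasurable hτ]
    _ ≤ eLpNorm (f ∘ τ) 1 P + eLpNorm f 1 P :=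
        add_le_add (eLpNorm_condExp_le_eLpNorm _ le_rfl) (eLpNorm_condExp_le_eLpNorm _ le_rfl)
    _ = 2 * eLpNorm f 1 P := by rw [eLpNorm_comp_measurePreserving hf hτ, two_mul]

theorem intertwinesCondExp_const [IsFiniteMeasure P] (hm₁ : m₁ ≤ m0) (hm₂ : m₂ ≤ m0) (c : ℝ) :
    IntertwinesCondExp P τ m₁ m₂ (fun _ => c) := by
  simp only [IntertwinesCondExp, Function.comp_def, condExp_const hm₁, condExp_const hm₂]
  rfl

namespace IntertwinesCondExp

theorem congr (hτ : MeasurePreserving τ P P) (hfg : f =ᵐ[P] g)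
    (hf : IntertwinesCondExp P τ m₁ m₂ f) : IntertwinesCondExp P τ m₁ m₂ g :=
  calc P[g ∘ τ|m₁] =ᵐ[P] P[f ∘ τ|m₁] :=
        condExp_congr_ae (hτ.quasiMeasurePreserving.ae_eq_comp hfg.symm)
    _ =ᵐ[P] P[f|m₂] ∘ τ := hf
    _ =ᵐ[P] P[g|m₂] ∘ τ := hτ.quasiMeasurePreserving.ae_eq_comp (condExp_congr_ae hfg)

theorem add (hτ : MeasurePreserving τ P P) (hf : Integrable f P) (hg : Integrable g P)
    (hQf : IntertwinesCondExp P τ m₁ m₂ f) (hQg : IntertwinesCondExp P τ m₁ m₂ g) :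
    IntertwinesCondExp P τ m₁ m₂ (f + g) :=
  calc P[(f + g) ∘ τ|m₁] =ᵐ[P] P[f ∘ τ|m₁] + P[g ∘ τ|m₁] :=
        condExp_add (hτ.integrable_comp_of_integrable hf) (hτ.integrable_comp_of_integrable hg) m₁
    _ =ᵐ[P] P[f|m₂] ∘ τ + P[g|m₂] ∘ τ := EventuallyEq.add hQf hQg
    _ =ᵐ[P] P[f + g|m₂] ∘ τ := hτ.quasiMeasurePreserving.ae_eq_comp (condExp_add hf hg m₂).symm

theorem sub (hτ : MeasurePreserving τ P P) (hf : Integrable f P) (hg : Integrable g P)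
    (hQf : IntertwinesCondExp P τ m₁ m₂ f) (hQg : IntertwinesCondExp P τ m₁ m₂ g) :
    IntertwinesCondExp P τ m₁ m₂ (f - g) :=
  calc P[(f - g) ∘ τ|m₁] =ᵐ[P] P[f ∘ τ|m₁] - P[g ∘ τ|m₁] :=
        condExp_sub (hτ.integrable_comp_of_integrable hf) (hτ.integrable_comp_of_integrable hg) m₁
    _ =ᵐ[P] P[f|m₂] ∘ τ - P[g|m₂] ∘ τ := EventuallyEq.sub hQf hQg
    _ =ᵐ[P] P[f - g|m₂] ∘ τ := hτ.quasiMeasurePreserving.ae_eq_comp (condExp_sub hf hg m₂).symm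

theorem const_smul (hτ : MeasurePreserving τ P P) (c : ℝ)
    (hf : IntertwinesCondExp P τ m₁ m₂ f) : IntertwinesCondExp P τ m₁ m₂ (c • f) :=
  calc P[(c • f) ∘ τ|m₁] =ᵐ[P] c • P[f ∘ τ|m₁] := condExp_smul c (f ∘ τ) m₁
    _ =ᵐ[P] c • (P[f|m₂] ∘ τ) := EventuallyEq.const_smul hf c
    _ =ᵐ[P] P[c • f|m₂] ∘ τ := hτ.quasiMeasurePreserving.ae_eq_comp (condExp_smul c f m₂).symm

theorem finset_sum {ι : Type*} (hτ : MeasurePreserving τ P P) {s : Finset ι}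
    {fs : ι → Ω → ℝ} (hfs : ∀ i ∈ s, Integrable (fs i) P)
    (hQ : ∀ i ∈ s, IntertwinesCondExp P τ m₁ m₂ (fs i)) :
    IntertwinesCondExp P τ m₁ m₂ (∑ i ∈ s, fs i) := by
  classical
  induction s using Finset.induction_on with
  | empty => simp [IntertwinesCondExp, condExp_zero]
  | insert i s hi ih =>
    simp only [Finset.mem_insert, forall_eq_or_imp] at hfs hQ
    rw [Finset.sum_insert hi]
    exact hQ.1.add hτ hfs.1 (integrable_finsetSum' s hfs.2) (ih hfs.2 hQ.2)

theorem of_tendsto (hτ : MeasurePreserving τ P P) {fs : ℕ → Ω → ℝ}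
    (hf : Integrable f P) (hfs : ∀ n, Integrable (fs n) P)
    (hQ : ∀ n, IntertwinesCondExp P τ m₁ m₂ (fs n))
    (hlim : Tendsto (fun n => eLpNorm (fs n - f) 1 P) atTop (𝓝 0)) :
    IntertwinesCondExp P τ m₁ m₂ f := by
  set D : (Ω → ℝ) → Ω → ℝ := fun g => P[g ∘ τ|m₁] - P[g|m₂] ∘ τ
  have hD_meas : AEStronglyMeasurable (D f) P :=
    integrable_condExp.aestronglyMeasurable.sub
      (hτ.integrable_comp_of_integrable integrable_condExp).aestronglyMeasurable
  -- `D` is additive and vanishes at `fs n`.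
  have hD_eq : ∀ n, D f =ᵐ[P] D (f - fs n) := fun n => by
    have hsub_comp : (f - fs n) ∘ τ = f ∘ τ - fs n ∘ τ := rfl
    filter_upwards [condExp_sub (m := m₁) (hτ.integrable_comp_of_integrable hf)
        (hτ.integrable_comp_of_integrable (hfs n)),
      hτ.quasiMeasurePreserving.ae_eq_comp (condExp_sub (m := m₂) hf (hfs n)), hQ n]
      with x h₁ h₂ h₃
    simp only [D, hsub_comp, Pi.sub_apply, Function.comp_apply] at h₁ h₂ h₃ ⊢
    rw [h₁, h₂, h₃]
    ring
  have hD_le : ∀ n, eLpNorm (D f) 1 P ≤ 2 * eLpNorm (fs n - f) 1 P := fun n => by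
    rw [eLpNorm_congr_ae (hD_eq n), eLpNorm_sub_comm (fs n) f]
    exact eLpNorm_condExp_comp_sub_comp_condExp_le hτ (hf.sub (hfs n)).aestronglyMeasurable
  have hlim₂ : Tendsto (fun n => 2 * eLpNorm (fs n - f) 1 P) atTop (𝓝 0) := by
    simpa using ENNReal.Tendsto.const_mul hlim (Or.inr ENNReal.ofNat_ne_top)
  have hD_zero : eLpNorm (D f) 1 P = 0 :=
    le_antisymm (ge_of_tendsto' hlim₂ hD_le) zero_le
  exact eventuallyEq_iff_sub.2 ((eLpNorm_eq_zero_iff hD_meas one_ne_zero).1 hD_zero)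

theorem indicator_iUnion [IsFiniteMeasure P] (hτ : MeasurePreserving τ P P)
    {s : ℕ → Set Ω} (hs : ∀ n, MeasurableSet (s n)) (hdisj : Pairwise (Function.onFun Disjoint s))
    (hQ : ∀ n, IntertwinesCondExp P τ m₁ m₂ ((s n).indicator 1)) :
    IntertwinesCondExp P τ m₁ m₂ ((⋃ n, s n).indicator 1) := by
  set U : ℕ → Set Ω := fun n => ⋃ i ∈ Finset.range n, s i
  have hU_meas : ∀ n, MeasurableSet (U n) := fun n =>
    Finset.measurableSet_biUnion _ fun i _ => hs i
  have hU_mono : Monotone U := fun k n hkn =>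
    Set.biUnion_subset_biUnion_left (by simpa using Finset.range_mono hkn)
  have hU_iUnion : ⋃ n, U n = ⋃ n, s n := by
    ext x
    simp only [U, Set.mem_iUnion, Finset.mem_range, exists_prop]
    exact ⟨fun ⟨_, i, _, hi⟩ => ⟨i, hi⟩, fun ⟨i, hi⟩ => ⟨i + 1, i, i.lt_succ_self, hi⟩⟩
  have hU_indicator : ∀ n, (U n).indicator (1 : Ω → ℝ) = ∑ i ∈ Finset.range n, (s i).indicator 1 :=
    fun n => by
      rw [Finset.indicator_biUnion _ _ (hdisj.set_pairwise _)]
      ext x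
      simp [Finset.sum_apply]
  refine of_tendsto hτ (fs := fun n => (U n).indicator 1)
    ((integrable_const 1).indicator (MeasurableSet.iUnion hs))
    (fun n => (integrable_const 1).indicator (hU_meas n)) (fun n => ?_) ?_
  · rw [hU_indicator]
    exact finset_sum hτ (fun i _ => (integrable_const 1).indicator (hs i))
      fun i _ => hQ i
  · rw [← hU_iUnion]
    exact tendsto_eLpNorm_indicator_sub_indicator_iUnion hU_meas hU_mono

theorem indicator_of_isPiSystem [IsFiniteMeasure P]
    (hτ : MeasurePreserving τ P P) (hm₁ : m₁ ≤ m0) (hm₂ : m₂ ≤ m0) (hm : m ≤ m0)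
    {p : Set (Set Ω)} (hgen : m = MeasurableSpace.generateFrom p) (hp : IsPiSystem p)
    (hbasic : ∀ t ∈ p, IntertwinesCondExp P τ m₁ m₂ (t.indicator 1)) {t : Set Ω}
    (ht : MeasurableSet[m] t) : IntertwinesCondExp P τ m₁ m₂ (t.indicator 1) := by
  induction t, ht using MeasurableSpace.induction_on_inter hgen hp with
  | empty => simpa using intertwinesCondExp_const (τ := τ) (P := P) hm₁ hm₂ 0
  | basic t ht => exact hbasic t ht
  | compl t ht hQt =>
    rw [Set.indicator_compl]
    exact (intertwinesCondExp_const hm₁ hm₂ 1).sub hτ (integrable_const 1)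
      ((integrable_const 1).indicator (hm t ht)) hQt
  | iUnion s hdisj hs hQs =>
    exact indicator_iUnion hτ (fun n => hm _ (hs n)) hdisj hQs

theorem of_isPiSystem [IsFiniteMeasure P]
    (hτ : MeasurePreserving τ P P) (hm₁ : m₁ ≤ m0) (hm₂ : m₂ ≤ m0) (hm : m ≤ m0)
    {p : Set (Set Ω)} (hgen : m = MeasurableSpace.generateFrom p) (hp : IsPiSystem p)
    (hbasic : ∀ t ∈ p, IntertwinesCondExp P τ m₁ m₂ (t.indicator 1))
    (hf : Integrable f P) (hfm : StronglyMeasurable[m] f) : IntertwinesCondExp P τ m₁ m₂ f := by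
  refine MemLp.induction_stronglyMeasurable hm ENNReal.one_ne_top (IntertwinesCondExp P τ m₁ m₂)
    ?_ ?_ ?_ ?_ (memLp_one_iff_integrable.2 hf) hfm.aestronglyMeasurable
  · intro c t ht _
    rw [show t.indicator (fun _ => c) = c • t.indicator 1 by
      ext x; by_cases hx : x ∈ t <;> simp [hx]]
    exact (indicator_of_isPiSystem hτ hm₁ hm₂ hm hgen hp hbasic ht).const_smul
      hτ c
  · intro f g _ hf hg _ _ hQf hQg
    exact hQf.add hτ (memLp_one_iff_integrable.1 hf) (memLp_one_iff_integrable.1 hg) hQg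
  · have h_closed : IsClosed {f : Ω →₁[P] ℝ | IntertwinesCondExp P τ m₁ m₂ f} :=
      IsSeqClosed.isClosed fun _ _ hQ hlim => of_tendsto hτ (L1.integrable_coeFn _)
        (fun _ => L1.integrable_coeFn _) hQ ((Lp.tendsto_Lp_iff_tendsto_eLpNorm' _ _).1 hlim)
    exact h_closed.preimage continuous_subtype_val
  · intro f g hfg _ hQf
    exact hQf.congr hτ hfg

theorem of_forall_inter_inter [IsFiniteMeasure P]
    (hτ : MeasurePreserving τ P P) (hm₁ : m₁ ≤ m0) (hm₂ : m₂ ≤ m0) (hA : A ≤ m0) (hB : B ≤ m0)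
    (hC : C ≤ m0)
    (hbasic : ∀ a b c, MeasurableSet[A] a → MeasurableSet[B] b → MeasurableSet[C] c →
      IntertwinesCondExp P τ m₁ m₂ ((a ∩ b ∩ c).indicator 1))
    (hf : Integrable f P) (hfm : StronglyMeasurable[A ⊔ B ⊔ C] f) :
    IntertwinesCondExp P τ m₁ m₂ f := by
  have hA_univ : Set.univ ∈ {a | MeasurableSet[A] a} := MeasurableSet.univ
  have hAB_univ : Set.univ ∈ Set.image2 (· ∩ ·) {a | MeasurableSet[A] a} {b | MeasurableSet[B] b} :=
    ⟨_, hA_univ, _, MeasurableSet.univ, Set.univ_inter _⟩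
  refine of_isPiSystem hτ hm₁ hm₂ (sup_le (sup_le hA hB) hC) ?_
    (((@MeasurableSpace.isPiSystem_measurableSet _ A).image2_inter_measurableSet B
      ).image2_inter_measurableSet C) ?_ hf hfm
  · rw [generateFrom_image2_inter_measurableSet hAB_univ,
      generateFrom_image2_inter_measurableSet hA_univ,
      @MeasurableSpace.generateFrom_measurableSet _ A]
  · rintro _ ⟨_, ⟨a, ha, b, hb, rfl⟩, c, hc, rfl⟩
    exact hbasic a b c ha hb hc

end IntertwinesCondExp

end

theorem intertwinesCondExp_indicator_inter_inter {Ω : Type*} {A B C m0 : MeasurableSpace Ω}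
    {P : Measure Ω} [IsFiniteMeasure P] {τ : Ω → Ω}
    (hA : A ≤ m0) (hB : B ≤ m0) (hC : C ≤ m0) (hτ : MeasurePreserving τ P P)
    (hτAB : Measurable[B, A] τ) (hτBA : Measurable[A, B] τ)
    (hτC : ∀ c, MeasurableSet[C] c → τ ⁻¹' c =ᵐ[P] c)
    (hindA : Indep A (B ⊔ C) P) (hindB : Indep B (A ⊔ C) P) {a b c : Set Ω}
    (ha : MeasurableSet[A] a) (hb : MeasurableSet[B] b) (hc : MeasurableSet[C] c) :
    IntertwinesCondExp P τ (B ⊔ C) (A ⊔ C) ((a ∩ b ∩ c).indicator 1) := by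
  have h_comp : ∀ (s : Set Ω) (g : Ω → ℝ), s.indicator g ∘ τ = (τ ⁻¹' s).indicator (g ∘ τ) :=
    fun s g => funext fun x => (Set.indicator_comp_right τ).symm
  have h_pre : τ ⁻¹' (a ∩ b ∩ c) =ᵐ[P] (τ ⁻¹' a ∩ c ∩ τ ⁻¹' b : Set Ω) := by
    have h_ab : (τ ⁻¹' a ∩ τ ⁻¹' b ∩ τ ⁻¹' c : Set Ω) =ᵐ[P] (τ ⁻¹' a ∩ τ ⁻¹' b ∩ c : Set Ω) :=
      EventuallyEq.rfl.inter (hτC c hc)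
    rwa [Set.inter_right_comm (τ ⁻¹' a) (τ ⁻¹' b) c] at h_ab
  calc P[(a ∩ b ∩ c).indicator 1 ∘ τ|B ⊔ C]
      =ᵐ[P] P[(τ ⁻¹' a ∩ c ∩ τ ⁻¹' b).indicator 1|B ⊔ C] := by
        rw [h_comp]
        exact condExp_congr_ae (indicator_ae_eq_of_ae_eq_set h_pre)
    _ =ᵐ[P] (τ ⁻¹' a ∩ c).indicator fun _ => P.real b := by
        rw [← hτ.measureReal_preimage (hB _ hb).nullMeasurableSet]
        exact condExp_indicator_inter_of_indep (sup_le hB hC) hA hindA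
          ((le_sup_left (b := C) _ (hτAB ha)).inter (le_sup_right (a := B) _ hc)) (hτBA hb)
    _ =ᵐ[P] (τ ⁻¹' (a ∩ c)).indicator fun _ => P.real b :=
        indicator_ae_eq_of_ae_eq_set (EventuallyEq.rfl.inter (hτC c hc).symm)
    _ = (a ∩ c).indicator (fun _ => P.real b) ∘ τ := (h_comp _ fun _ => P.real b).symm
    _ =ᵐ[P] P[(a ∩ b ∩ c).indicator 1|A ⊔ C] ∘ τ := by
        rw [Set.inter_right_comm]
        exact hτ.quasiMeasurePreserving.ae_eq_comp (condExp_indicator_inter_of_indep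
          (sup_le hA hC) hB hindB ((le_sup_left (b := C) _ ha).inter (le_sup_right (a := A) _ hc))
          hb).symm

theorem condexp_swap_general
    {Ω : Type*} [m0 : MeasurableSpace Ω] (P : Measure Ω) [IsProbabilityMeasure P]
    (A B C : MeasurableSpace Ω)
    (hA : A ≤ m0) (hB : B ≤ m0) (hC : C ≤ m0)
    (hindep : iIndep ![A, B, C] P)
    (τ : Ω → Ω)
    (hτpres : @MeasurePreserving Ω Ω m0 m0 τ P P)
    (hAB : ∀ f : Ω → ℝ, (∃ M, ∀ ω, |f ω| ≤ M) → Measurable[A] f →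
      Measurable[B] (f ∘ τ))
    (hBA : ∀ f : Ω → ℝ, (∃ M, ∀ ω, |f ω| ≤ M) → Measurable[B] f →
      Measurable[A] (f ∘ τ))
    (hCfix : ∀ f : Ω → ℝ, (∃ M, ∀ ω, |f ω| ≤ M) → Measurable[C] f →
      f ∘ τ =ᵐ[P] f)
    (θ : Ω → ℝ) (hθint : Integrable θ P) (hθmeas : Measurable[A ⊔ B ⊔ C] θ) :
    P[θ ∘ τ|B ⊔ C] =ᵐ[P] (P[θ|A ⊔ C]) ∘ τ := by
  have hle : ∀ i, ![A, B, C] i ≤ m0 := fun i => by fin_cases i <;> assumption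
  refine IntertwinesCondExp.of_forall_inter_inter hτpres (sup_le hB hC) (sup_le hA hC) hA hB hC
    (fun a b c ha hb hc => ?_) hθint hθmeas.stronglyMeasurable
  exact intertwinesCondExp_indicator_inter_inter hA hB hC hτpres
    (measurable_of_forall_bounded_measurable_comp hAB)
    (measurable_of_forall_bounded_measurable_comp hBA)
    (fun c hc => preimage_ae_eq_of_forall_bounded_comp_ae_eq hCfix hc)
    (hindep.indep_sup hle (i := 0) (j := 1) (k := 2) (by decide) (by decide))
    (hindep.indep_sup hle (i := 1) (j := 0) (k := 2) (by decide) (by decide)) ha hb hc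

/-- Conditional expectation identity under a swapping measure-preserving
transformation: if the triple `(A, B, C)` is independent, `τ` is measure preserving,
maps bounded `A`-measurable functions to `B`-measurable ones and vice versa, and
fixes bounded `C`-measurable functions a.s., then
`E[θ ∘ τ | B ∨ C] = E[θ | A ∨ C] ∘ τ` a.s. for every integrable
`A ∨ B ∨ C`-measurable `θ`. -/
theorem condexp_swap
    {Ω : Type*} [m0 : MeasurableSpace Ω] (P : Measure Ω) [IsProbabilityMeasure P]
    (A B C : MeasurableSpace Ω)
    (hA : A ≤ m0) (hB : B ≤ m0) (hC : C ≤ m0)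
    (hindep : iIndep ![A, B, C] P)
    (τ : Ω → Ω) (hτmeas : @Measurable Ω Ω m0 m0 τ)
    (hτpres : @MeasurePreserving Ω Ω m0 m0 τ P P)
    (hAB : ∀ f : Ω → ℝ, (∃ M, ∀ ω, |f ω| ≤ M) → Measurable[A] f →
      Measurable[B] (f ∘ τ))
    (hBA : ∀ f : Ω → ℝ, (∃ M, ∀ ω, |f ω| ≤ M) → Measurable[B] f →
      Measurable[A] (f ∘ τ))
    (hCfix : ∀ f : Ω → ℝ, (∃ M, ∀ ω, |f ω| ≤ M) → Measurable[C] f →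
      f ∘ τ =ᵐ[P] f)
    (θ : Ω → ℝ) (hθint : Integrable θ P) (hθmeas : Measurable[A ⊔ B ⊔ C] θ) :
    P[θ ∘ τ|B ⊔ C] =ᵐ[P] (P[θ|A ⊔ C]) ∘ τ :=
  condexp_swap_general (m0 := m0) P A B C hA hB hC hindep τ hτpres hAB hBA hCfix θ hθint hθmeas
end

section
/- L¹ contraction step in the proof of Lemma 3.2: Let (Ω, F, P) be a probability space and A, B, C sub-σ-algebras of F such that the triple (A, B, C) is independent under P. Let τ : Ω → Ω be measurable and measure preserving (P ∘ τ⁻¹ = P) such that: f ∘ τ is B-measurable for every bounded A-measurable f : Ω → ℝ; f ∘ τ is A-measurable for every bounded B-measurable f; and f ∘ τ = f P-a.s. for every bounded C-measurable f. If ζ : Ω → ℝ is P-integrable, measurable with respect to A ∨ B ∨ C, and satisfies ζ ∘ τ = ζ P-a.s., then E[ |E[ζ | A] − E[ζ]| ] ≤ E[ |E[ζ | B ∨ C] − E[ζ]| ]. -/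
/-!
Since `τ⁻¹ A ⊆ B`, composing with `τ` turns `E[ζ | A]` into `E[ζ ∘ τ | τ⁻¹ A] = E[ζ | τ⁻¹ A]`
(by invariance of `ζ`) without changing the law, so the left side equals
`E[|E[ζ | τ⁻¹ A] − E[ζ]|]`. As `τ⁻¹ A ⊆ B ∨ C`, this is the conditional expectation of
`E[ζ | B ∨ C] − E[ζ]` given a coarser σ-algebra, and conditional expectation contracts `L¹`.
-/

open MeasureTheory ProbabilityTheory

theorem MeasurableSpace.comap_le_of_forall_bounded_measurable_comp {α β : Type*}
    {mα : MeasurableSpace α} {mβ : MeasurableSpace β} {τ : α → β}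
    (h : ∀ f : β → ℝ, (∃ M, ∀ y, |f y| ≤ M) → Measurable[mβ] f → Measurable[mα] (f ∘ τ)) :
    mβ.comap τ ≤ mα := by
  rintro _ ⟨t, ht, rfl⟩
  have hbdd : ∃ M, ∀ y, |t.indicator (fun _ => (1 : ℝ)) y| ≤ M :=
    ⟨1, fun y => by by_cases hy : y ∈ t <;> simp [hy]⟩
  have hcomp : Measurable[mα] ((τ ⁻¹' t).indicator fun _ => (1 : ℝ)) :=
    h _ hbdd (measurable_const.indicator ht)
  exact (measurable_indicator_const_iff 1).mp hcomp

section MeasurePreserving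

variable {α β E : Type*} {m : MeasurableSpace β} [mα : MeasurableSpace α]
  [mβ : MeasurableSpace β] [NormedAddCommGroup E] [NormedSpace ℝ E]
  {μ : Measure α} {ν : Measure β} {τ : α → β}

theorem MeasureTheory.MeasurePreserving.integral_comp_of_aestronglyMeasurable_s7
    (hτ : MeasurePreserving τ μ ν) {g : β → E} (hg : AEStronglyMeasurable g ν) :
    ∫ x, g (τ x) ∂μ = ∫ y, g y ∂ν := by
  rw [← hτ.map_eq] at hg ⊢
  exact (integral_map hτ.aemeasurable hg).symm

theorem MeasureTheory.MeasurePreserving.condExp_comp [CompleteSpace E] [IsFiniteMeasure μ]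
    (hτ : MeasurePreserving τ μ ν) (hm : m ≤ mβ) {f : β → E} (hf : Integrable f ν) :
    ν[f|m] ∘ τ =ᵐ[μ] μ[f ∘ τ|m.comap τ] := by
  have : IsFiniteMeasure ν := hτ.map_eq ▸ inferInstance
  have hcomap : m.comap τ ≤ mα := (MeasurableSpace.comap_mono hm).trans hτ.measurable.comap_le
  have hset : ∀ g : β → E, AEStronglyMeasurable g ν → ∀ t, MeasurableSet t →
      ∫ x in τ ⁻¹' t, g (τ x) ∂μ = ∫ y in t, g y ∂ν := fun g hg t ht =>
    (hτ.restrict_preimage ht).integral_comp_of_aestronglyMeasurable_s7 hg.restrict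
  refine ae_eq_condExp_of_forall_setIntegral_eq hcomap (hτ.integrable_comp_of_integrable hf)
    (fun _ _ _ => (hτ.integrable_comp_of_integrable integrable_condExp).integrableOn) ?_
    (stronglyMeasurable_condExp.comp_measurable (comap_measurable τ)).aestronglyMeasurable
  rintro _ ⟨t, ht, rfl⟩ -
  simp only [Function.comp_apply]
  rw [hset _ (stronglyMeasurable_condExp.mono hm).aestronglyMeasurable t (hm t ht),
    setIntegral_condExp hm hf ht, hset _ hf.aestronglyMeasurable t (hm t ht)]

end MeasurePreserving

theorem integral_abs_condExp_sub_const_le_of_le {α : Type*} {m₁ m₂ m₀ : MeasurableSpace α}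
    {μ : Measure α} [IsFiniteMeasure μ] (h₁₂ : m₁ ≤ m₂) (h₂ : m₂ ≤ m₀) (f : α → ℝ) (c : ℝ) :
    ∫ x, |μ[f|m₁] x - c| ∂μ ≤ ∫ x, |μ[f|m₂] x - c| ∂μ := by
  have hcoarse : μ[f|m₁] - (fun _ => c) =ᵐ[μ] μ[μ[f|m₂] - (fun _ => c)|m₁] := by
    filter_upwards [condExp_condExp_of_le (f := f) h₁₂ h₂,
      condExp_sub integrable_condExp (integrable_const c) m₁] with x htower hsub
    rw [hsub, Pi.sub_apply, Pi.sub_apply, htower, condExp_const (h₁₂.trans h₂)]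
  calc ∫ x, |μ[f|m₁] x - c| ∂μ = ∫ x, |μ[μ[f|m₂] - (fun _ => c)|m₁] x| ∂μ :=
        integral_congr_ae (hcoarse.fun_comp abs)
    _ ≤ ∫ x, |μ[f|m₂] x - c| ∂μ := integral_abs_condExp_le _

theorem l1_contraction_step_general
    {Ω : Type*} [m0 : MeasurableSpace Ω] (P : Measure Ω) [IsProbabilityMeasure P]
    (A B C : MeasurableSpace Ω)
    (hA : A ≤ m0) (hB : B ≤ m0) (hC : C ≤ m0)
    (τ : Ω → Ω)
    (hτpres : @MeasurePreserving Ω Ω m0 m0 τ P P)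
    (hAB : ∀ f : Ω → ℝ, (∃ M, ∀ ω, |f ω| ≤ M) → Measurable[A] f →
      Measurable[B] (f ∘ τ))
    (ζ : Ω → ℝ) (hζint : Integrable ζ P)
    (hζinv : ζ ∘ τ =ᵐ[P] ζ) :
    ∫ ω, |(P[ζ|A]) ω - ∫ x, ζ x ∂P| ∂P
      ≤ ∫ ω, |(P[ζ|B ⊔ C]) ω - ∫ x, ζ x ∂P| ∂P := by
  -- otherwise instance search takes `C`, the most recent `MeasurableSpace Ω` binder, as ambient
  let _ : MeasurableSpace Ω := m0
  set c := ∫ x, ζ x ∂P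
  have hAτ : A.comap τ ≤ B ⊔ C :=
    (MeasurableSpace.comap_le_of_forall_bounded_measurable_comp hAB).trans le_sup_left
  have hpull : P[ζ|A] ∘ τ =ᵐ[P] P[ζ|A.comap τ] :=
    (hτpres.condExp_comp hA hζint).trans (condExp_congr_ae hζinv)
  calc ∫ ω, |P[ζ|A] ω - c| ∂P = ∫ ω, |P[ζ|A] (τ ω) - c| ∂P :=
        (hτpres.integral_comp_of_aestronglyMeasurable_s7
          (integrable_condExp.sub (integrable_const c)).aestronglyMeasurable.norm).symm
    _ = ∫ ω, |P[ζ|A.comap τ] ω - c| ∂P :=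
        integral_congr_ae (hpull.fun_comp fun y => |y - c|)
    _ ≤ ∫ ω, |P[ζ|B ⊔ C] ω - c| ∂P :=
        integral_abs_condExp_sub_const_le_of_le hAτ (sup_le hB hC) ζ c

/-- L¹ contraction step in the proof of Lemma 3.2: under the swapping
measure-preserving transformation `τ`, an integrable `A ∨ B ∨ C`-measurable
invariant random variable `ζ` satisfies
`E[|E[ζ|A] − E[ζ]|] ≤ E[|E[ζ|B ∨ C] − E[ζ]|]`. -/
theorem l1_contraction_step
    {Ω : Type*} [m0 : MeasurableSpace Ω] (P : Measure Ω) [IsProbabilityMeasure P]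
    (A B C : MeasurableSpace Ω)
    (hA : A ≤ m0) (hB : B ≤ m0) (hC : C ≤ m0)
    (hindep : iIndep ![A, B, C] P)
    (τ : Ω → Ω) (hτmeas : @Measurable Ω Ω m0 m0 τ)
    (hτpres : @MeasurePreserving Ω Ω m0 m0 τ P P)
    (hAB : ∀ f : Ω → ℝ, (∃ M, ∀ ω, |f ω| ≤ M) → Measurable[A] f →
      Measurable[B] (f ∘ τ))
    (hBA : ∀ f : Ω → ℝ, (∃ M, ∀ ω, |f ω| ≤ M) → Measurable[B] f →
      Measurable[A] (f ∘ τ))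
    (hCfix : ∀ f : Ω → ℝ, (∃ M, ∀ ω, |f ω| ≤ M) → Measurable[C] f →
      f ∘ τ =ᵐ[P] f)
    (ζ : Ω → ℝ) (hζint : Integrable ζ P) (hζmeas : Measurable[A ⊔ B ⊔ C] ζ)
    (hζinv : ζ ∘ τ =ᵐ[P] ζ) :
    ∫ ω, |(P[ζ|A]) ω - ∫ x, ζ x ∂P| ∂P
      ≤ ∫ ω, |(P[ζ|B ⊔ C]) ω - ∫ x, ζ x ∂P| ∂P :=
  l1_contraction_step_general (m0 := m0) P A B C hA hB hC τ hτpres hAB ζ hζint hζinv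
end

section
/- Hessian bound for ψ (used in the proof of Lemma 5.2): There exists a constant C > 0 such that the function ψ(x) := (log((|x|²+1)^{1/2}) + 1)² on ℝⁿ satisfies ‖D²ψ(x)‖ ≤ C (1 + ψ(x)^{1/2}) / (|x|²+1) for every x ∈ ℝⁿ, where D²ψ(x) denotes the second derivative (Hessian) of ψ at x and ‖·‖ its operator norm. -/
/-!
Write `ψ(x) = g(|x|²)` with `g = a²` and `a(s) = log(s + 1)/2 + 1`, so that `√ψ(x) = a(|x|²)`.
The Hessian of a radial function `x ↦ g(|x|²)` is `2 g'(s) ⟨·,·⟩ + 4 g''(s) ⟨x,·⟩ ⟨x,·⟩` with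
`s = |x|²`, of operator norm at most `2 |g'(s)| + 4 |g''(s)| s`. Here `g' = a/(s + 1)` and
`g'' = (1/2 - a)/(s + 1)²`, and since `a ≥ 1` this is at most `6 a(s)/(s + 1)`.
-/

open Set

noncomputable section

/-- The state space `ℝⁿ`. -/
abbrev Vec (n : ℕ) := EuclideanSpace ℝ (Fin n)

/-- `ψ(x) = (log((|x|²+1)^{1/2}) + 1)²`. -/
def psi {n : ℕ} (x : Vec n) : ℝ := (Real.log (Real.sqrt (‖x‖ ^ 2 + 1)) + 1) ^ 2

section Radial

variable {E : Type*} [NormedAddCommGroup E] [InnerProductSpace ℝ E] {g g' g'' : ℝ → ℝ}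

theorem hasFDerivAt_comp_norm_sq {y : E} (hg : HasDerivAt g (g' (‖y‖ ^ 2)) (‖y‖ ^ 2)) :
    HasFDerivAt (fun z : E => g (‖z‖ ^ 2)) ((2 * g' (‖y‖ ^ 2)) • innerSL ℝ y) y := by
  refine (hg.comp_hasFDerivAt y (hasStrictFDerivAt_norm_sq y).hasFDerivAt).congr_fderiv ?_
  ext v
  simp only [smul_apply, coe_innerSL_apply, nsmul_eq_mul, Nat.cast_ofNat, smul_eq_mul]
  ring

theorem hasFDerivAt_fderiv_comp_norm_sq {x : E} (hg : ∀ s, 0 ≤ s → HasDerivAt g (g' s) s)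
    (hg' : HasDerivAt g' (g'' (‖x‖ ^ 2)) (‖x‖ ^ 2)) :
    HasFDerivAt (fderiv ℝ fun z : E => g (‖z‖ ^ 2))
      -- `innerSL ℝ` is typed as conjugate-linear; over `ℝ` it is linear, but only up to defeq
      ((2 * g' (‖x‖ ^ 2)) • (show E →L[ℝ] E →L[ℝ] ℝ from innerSL ℝ) +
        ((4 * g'' (‖x‖ ^ 2)) • innerSL ℝ x).smulRight (innerSL ℝ x)) x := by
  have hD : (fderiv ℝ fun z : E => g (‖z‖ ^ 2)) = fun y => (2 * g' (‖y‖ ^ 2)) • innerSL ℝ y :=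
    funext fun y => (hasFDerivAt_comp_norm_sq (hg _ (by positivity))).fderiv
  have hc : HasFDerivAt (fun y : E => 2 * g' (‖y‖ ^ 2)) ((4 * g'' (‖x‖ ^ 2)) • innerSL ℝ x) x := by
    refine (hasFDerivAt_comp_norm_sq (g' := fun t => 2 * g'' t) (hg'.const_mul 2)).congr_fderiv ?_
    rw [← mul_assoc]; norm_num
  rw [hD]
  exact hc.smul (innerSL ℝ).hasFDerivAt

theorem norm_fderiv_fderiv_comp_norm_sq_le (x : E) (hg : ∀ s, 0 ≤ s → HasDerivAt g (g' s) s)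
    (hg' : HasDerivAt g' (g'' (‖x‖ ^ 2)) (‖x‖ ^ 2)) :
    ‖fderiv ℝ (fderiv ℝ fun z : E => g (‖z‖ ^ 2)) x‖
      ≤ 2 * |g' (‖x‖ ^ 2)| + 4 * |g'' (‖x‖ ^ 2)| * ‖x‖ ^ 2 := by
  rw [(hasFDerivAt_fderiv_comp_norm_sq hg hg').fderiv]
  refine (norm_add_le (E := E →L[ℝ] E →L[ℝ] ℝ) _ _).trans (add_le_add ?_ (le_of_eq ?_))
  · refine (ContinuousLinearMap.opNorm_smul_le _ _).trans ?_
    rw [Real.norm_eq_abs, abs_mul, abs_two]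
    exact mul_le_of_le_one_right (by positivity) (norm_innerSL_le ℝ)
  · rw [ContinuousLinearMap.norm_smulRight_apply, norm_smul, innerSL_apply_norm, Real.norm_eq_abs,
      abs_mul, abs_of_pos four_pos]
    ring

end Radial

def psiRoot (s : ℝ) : ℝ := Real.log (s + 1) / 2 + 1

theorem psi_eq_psiRoot_sq {n : ℕ} (x : Vec n) : psi x = psiRoot (‖x‖ ^ 2) ^ 2 := by
  rw [psi, psiRoot, Real.log_sqrt (by positivity)]

theorem one_le_psiRoot {s : ℝ} (hs : 0 ≤ s) : 1 ≤ psiRoot s := by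
  have := Real.log_nonneg (by linarith : 1 ≤ s + 1)
  rw [psiRoot]
  linarith

theorem sqrt_psi {n : ℕ} (x : Vec n) : √(psi x) = psiRoot (‖x‖ ^ 2) := by
  rw [psi_eq_psiRoot_sq, Real.sqrt_sq (by linarith [one_le_psiRoot (by positivity : 0 ≤ ‖x‖ ^ 2)])]

theorem hasDerivAt_psiRoot {s : ℝ} (hs : -1 < s) : HasDerivAt psiRoot (1 / (2 * (s + 1))) s := by
  have hs1 : s + 1 ≠ 0 := by linarith
  refine ((((hasDerivAt_id' s).add_const 1).log hs1).div_const 2 |>.add_const 1).congr_deriv ?_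
  field_simp

theorem hasDerivAt_psiRoot_sq {s : ℝ} (hs : -1 < s) :
    HasDerivAt (fun t => psiRoot t ^ 2) (psiRoot s / (s + 1)) s := by
  refine ((hasDerivAt_psiRoot hs).pow 2).congr_deriv ?_
  field_simp
  ring

theorem hasDerivAt_psiRoot_div {s : ℝ} (hs : -1 < s) :
    HasDerivAt (fun t => psiRoot t / (t + 1)) ((1 / 2 - psiRoot s) / (s + 1) ^ 2) s := by
  have hs1 : s + 1 ≠ 0 := by linarith
  refine ((hasDerivAt_psiRoot hs).div ((hasDerivAt_id' s).add_const 1) hs1).congr_deriv ?_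
  field_simp

theorem psiRoot_hessian_coeff_le {s : ℝ} (hs : 0 ≤ s) :
    2 * |psiRoot s / (s + 1)| + 4 * |(1 / 2 - psiRoot s) / (s + 1) ^ 2| * s
      ≤ 6 * psiRoot s / (s + 1) := by
  have ha := one_le_psiRoot hs
  have hs1 : 0 < s + 1 := by linarith
  have key : (psiRoot s - 1 / 2) * s ≤ psiRoot s * (s + 1) := by nlinarith
  rw [abs_of_pos (by positivity), abs_div, abs_of_nonpos (by linarith), abs_of_pos (by positivity)]
  calc _ = (2 * psiRoot s * (s + 1) + 4 * ((psiRoot s - 1 / 2) * s)) / (s + 1) ^ 2 := by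
          field_simp
          ring
    _ ≤ 6 * psiRoot s * (s + 1) / (s + 1) ^ 2 := by gcongr; linarith
    _ = 6 * psiRoot s / (s + 1) := by field_simp

/-- Hessian bound for `ψ`: there is `C > 0` with
`‖D²ψ(x)‖ ≤ C (1 + ψ(x)^{1/2}) / (|x|²+1)` for every `x`. -/
theorem psi_hessian_bound (n : ℕ) :
    ∃ C : ℝ, 0 < C ∧ ∀ x : Vec n,
      ‖fderiv ℝ (fun y : Vec n => fderiv ℝ (fun z : Vec n => psi z) y) x‖
        ≤ C * (1 + Real.sqrt (psi x)) / (‖x‖ ^ 2 + 1) := by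
  refine ⟨6, by norm_num, fun x => ?_⟩
  have hx : 0 ≤ ‖x‖ ^ 2 := by positivity
  rw [sqrt_psi]
  simp only [psi_eq_psiRoot_sq]
  calc _ ≤ 2 * |psiRoot (‖x‖ ^ 2) / (‖x‖ ^ 2 + 1)|
          + 4 * |(1 / 2 - psiRoot (‖x‖ ^ 2)) / (‖x‖ ^ 2 + 1) ^ 2| * ‖x‖ ^ 2 :=
        norm_fderiv_fderiv_comp_norm_sq_le x (g'' := fun s => (1 / 2 - psiRoot s) / (s + 1) ^ 2)
          (fun _ hs => hasDerivAt_psiRoot_sq (by linarith)) (hasDerivAt_psiRoot_div (by linarith))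
    _ ≤ 6 * psiRoot (‖x‖ ^ 2) / (‖x‖ ^ 2 + 1) := psiRoot_hessian_coeff_le hx
    _ ≤ 6 * (1 + psiRoot (‖x‖ ^ 2)) / (‖x‖ ^ 2 + 1) := by gcongr; linarith

end
end

section
/- Increment estimates for χ, uniform in C₁ (used in the proof of Lemma 5.2): Let T > 0, Ã > 0, C₁ > 0 and M > 0, and set t₁ := max(T − Ã/C₁, 0). There exists a constant C > 0 depending only on Ã, M and the dimension n (in particular independent of C₁) such that for all t ∈ [t₁, T], all x ∈ ℝⁿ and all y ∈ ℝⁿ with |y| ≤ M: χ(t, x+y) − χ(t,x) − Dχ(t,x)·y ≤ C χ(t,x) (ψ(x)/(|x|²+1)) |y|², and χ(t, x+y) − χ(t,x) ≤ C χ(t,x) (ψ(x)^{1/2}/(|x|²+1)^{1/2}) |y|, where Dχ denotes the gradient of χ in the variable x. -/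
/-!
Write `χ(t, ·) = exp (a ψ)` with `a = C₁ (T - t) + Ã`. For `t ∈ [t₁, T]` the weight `a` lies in
`[Ã, 2Ã]`, and this is the only way `C₁` enters. Along the segment `s ↦ x + s y` the first two
derivatives of `exp (a ψ)` are at most `2a exp (a ψ) √ψ |y| / ⟨·⟩` and
`(4a² + 4a) exp (a ψ) ψ |y|² / ⟨·⟩²`, where `⟨z⟩² = |z|² + 1`. For `|v| ≤ M` these quantities at
`x + v` are controlled by those at `x`: `⟨x⟩² ≤ (2 + 2M²) ⟨x + v⟩²`, and
`√ψ(x) (√ψ(x + v) - √ψ(x)) ≤ M + M²/2` (by `log r ≤ r - 1` and `√ψ ≤ ⟨·⟩`), so `ψ(x + v) - ψ(x)` is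
bounded and `exp (a ψ(x + v)) ≤ C exp (a ψ(x))`. Taylor's formula of order two, resp. one, on the
segment then gives the two estimates.
-/

open Set

noncomputable section

/-- `χ(t,x) = exp((C₁(T−t) + Ã) ψ(x))`. -/
def chi {n : ℕ} (T A C₁ : ℝ) (t : ℝ) (x : Vec n) : ℝ :=
  Real.exp ((C₁ * (T - t) + A) * psi x)

theorem abs_sub_sub_deriv_le_of_abs_deriv2_le {f f' f'' : ℝ → ℝ} {C : ℝ}
    (hf : ∀ s ∈ Icc (0 : ℝ) 1, HasDerivAt f (f' s) s)
    (hf' : ∀ s ∈ Icc (0 : ℝ) 1, HasDerivAt f' (f'' s) s)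
    (bound : ∀ s ∈ Icc (0 : ℝ) 1, |f'' s| ≤ C) : |f 1 - f 0 - f' 0| ≤ C := by
  have hC : 0 ≤ C := (abs_nonneg _).trans (bound 0 (left_mem_Icc.2 zero_le_one))
  have hf'_sub : ∀ s ∈ Icc (0 : ℝ) 1, ‖f' s - f' 0‖ ≤ C := fun s hs => by
    have := norm_image_sub_le_of_norm_deriv_le_segment'
      (fun r hr => (hf' r hr).hasDerivWithinAt) (fun r hr => bound r (Ico_subset_Icc_self hr)) s hs
    nlinarith [hs.2]
  have hg : ∀ s ∈ Icc (0 : ℝ) 1,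
      HasDerivWithinAt (fun s => f s - s * f' 0) (f' s - f' 0) (Icc 0 1) s := fun s hs =>
    (((hf s hs).sub ((hasDerivAt_id s).mul_const (f' 0))).congr_deriv (by simp)).hasDerivWithinAt
  have := norm_image_sub_le_of_norm_deriv_le_segment_01' hg
    (fun s hs => hf'_sub s (Ico_subset_Icc_self hs))
  simpa [sub_right_comm] using this

section SeminormedAddCommGroup

variable {E : Type*} [SeminormedAddCommGroup E]

-- `bracketSq z = ⟨z⟩²`, `logBracket z = log ⟨z⟩ + 1 = √ψ(z)`, `expWeight a z = exp (a ψ(z))`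
def bracketSq (z : E) : ℝ := ‖z‖ ^ 2 + 1

def logBracket (z : E) : ℝ := Real.log (bracketSq z) / 2 + 1

def expWeight (a : ℝ) (z : E) : ℝ := Real.exp (a * logBracket z ^ 2)

lemma one_le_bracketSq (z : E) : 1 ≤ bracketSq z := by
  unfold bracketSq; linarith [sq_nonneg ‖z‖]

lemma bracketSq_pos (z : E) : 0 < bracketSq z := one_pos.trans_le (one_le_bracketSq z)

lemma one_le_sqrt_bracketSq (z : E) : 1 ≤ √(bracketSq z) :=
  Real.one_le_sqrt.2 (one_le_bracketSq z)

lemma norm_le_sqrt_bracketSq (z : E) : ‖z‖ ≤ √(bracketSq z) :=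
  Real.le_sqrt_of_sq_le (by unfold bracketSq; linarith)

lemma one_le_logBracket (z : E) : 1 ≤ logBracket z := by
  have := Real.log_nonneg (one_le_bracketSq z)
  unfold logBracket; linarith

lemma logBracket_pos (z : E) : 0 < logBracket z := one_pos.trans_le (one_le_logBracket z)

lemma logBracket_le_sqrt_bracketSq (z : E) : logBracket z ≤ √(bracketSq z) := by
  have := Real.log_le_sub_one_of_pos (Real.sqrt_pos.2 (bracketSq_pos z))
  rw [Real.log_sqrt (bracketSq_pos z).le] at this
  unfold logBracket; linarith

lemma expWeight_pos (a : ℝ) (z : E) : 0 < expWeight a z := Real.exp_pos _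

lemma bracketSq_le_mul_bracketSq_add {M : ℝ} (z v : E) (hv : ‖v‖ ≤ M) :
    bracketSq z ≤ (2 + 2 * M ^ 2) * bracketSq (z + v) := by
  have hz : ‖z‖ ≤ ‖z + v‖ + M := by
    simpa using (norm_sub_le (z + v) v).trans (add_le_add_right hv _)
  have := pow_le_pow_left₀ (norm_nonneg z) hz 2
  unfold bracketSq
  nlinarith [sq_nonneg (‖z + v‖ - M), sq_nonneg ‖z + v‖]

lemma bracketSq_add_sub_le {M : ℝ} (z v : E) (hv : ‖v‖ ≤ M) :
    bracketSq (z + v) - bracketSq z ≤ 2 * √(bracketSq z) * M + M ^ 2 := by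
  have hM : 0 ≤ M := (norm_nonneg v).trans hv
  have hzv : ‖z + v‖ ≤ ‖z‖ + M := (norm_add_le z v).trans (add_le_add_right hv _)
  have := pow_le_pow_left₀ (norm_nonneg _) hzv 2
  have := mul_le_mul_of_nonneg_right (norm_le_sqrt_bracketSq z) hM
  unfold bracketSq at *
  nlinarith

def logBracketGrowth (M : ℝ) : ℝ := M + M ^ 2 / 2

lemma logBracketGrowth_nonneg {M : ℝ} (hM : 0 ≤ M) : 0 ≤ logBracketGrowth M := by
  unfold logBracketGrowth; positivity

lemma logBracket_mul_sub_le {M : ℝ} (z v : E) (hv : ‖v‖ ≤ M) :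
    logBracket z * (logBracket (z + v) - logBracket z) ≤ logBracketGrowth M := by
  have hM : 0 ≤ M := (norm_nonneg v).trans hv
  set w := bracketSq z
  set r := √w
  have hw : 0 < w := bracketSq_pos z
  have hr : 1 ≤ r := one_le_sqrt_bracketSq z
  have hrw : r ^ 2 = w := Real.sq_sqrt hw.le
  -- `log x ≤ x - 1` applied to the ratio of the two brackets
  have hlog : logBracket (z + v) - logBracket z ≤ (2 * r * M + M ^ 2) / (2 * w) := by
    have hquot := Real.log_le_sub_one_of_pos (div_pos (bracketSq_pos (z + v)) hw)
    rw [Real.log_div (bracketSq_pos (z + v)).ne' hw.ne'] at hquot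
    calc logBracket (z + v) - logBracket z
        = (Real.log (bracketSq (z + v)) - Real.log w) / 2 := by unfold logBracket; ring
      _ ≤ (bracketSq (z + v) / w - 1) / 2 := by gcongr
      _ = (bracketSq (z + v) - w) / (2 * w) := by field_simp
      _ ≤ (2 * r * M + M ^ 2) / (2 * w) := by gcongr; exact bracketSq_add_sub_le z v hv
  calc logBracket z * (logBracket (z + v) - logBracket z)
      ≤ logBracket z * ((2 * r * M + M ^ 2) / (2 * w)) :=
        mul_le_mul_of_nonneg_left hlog (logBracket_pos z).le
    _ ≤ r * ((2 * r * M + M ^ 2) / (2 * w)) := by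
        gcongr; exact logBracket_le_sqrt_bracketSq z
    _ = M + M ^ 2 / (2 * r) := by rw [← hrw]; field_simp
    _ ≤ logBracketGrowth M := by unfold logBracketGrowth; gcongr; linarith

lemma logBracket_add_le {M : ℝ} (z v : E) (hv : ‖v‖ ≤ M) :
    logBracket (z + v) ≤ (1 + logBracketGrowth M) * logBracket z := by
  have h := logBracket_mul_sub_le z v hv
  have hu := one_le_logBracket z
  have hK : logBracketGrowth M ≤ logBracketGrowth M * logBracket z ^ 2 :=
    le_mul_of_one_le_right (logBracketGrowth_nonneg ((norm_nonneg v).trans hv)) (by nlinarith)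
  refine le_of_mul_le_mul_left ?_ (logBracket_pos z)
  nlinarith

lemma logBracket_add_sq_le {M : ℝ} (z v : E) (hv : ‖v‖ ≤ M) :
    logBracket (z + v) ^ 2 ≤
      logBracket z ^ 2 + (2 * logBracketGrowth M + logBracketGrowth M ^ 2) := by
  set u := logBracket z
  set K := logBracketGrowth M
  have hu : 1 ≤ u := one_le_logBracket z
  have hK : 0 ≤ K := logBracketGrowth_nonneg ((norm_nonneg v).trans hv)
  -- `u (z + v) ≤ u + K / u` and `u ≥ 1`
  have h1 : u * logBracket (z + v) ≤ u ^ 2 + K := by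
    nlinarith [logBracket_mul_sub_le z v hv]
  have h2 : (u * logBracket (z + v)) ^ 2 ≤ (u ^ 2 + K) ^ 2 :=
    pow_le_pow_left₀ (mul_pos (logBracket_pos z) (logBracket_pos _)).le h1 2
  have h3 : K ^ 2 ≤ K ^ 2 * u ^ 2 := le_mul_of_one_le_right (sq_nonneg K) (by nlinarith)
  have h4 : 0 < u ^ 2 := by positivity
  nlinarith

def expWeightGrowth (B M : ℝ) : ℝ :=
  Real.exp (B * (2 * logBracketGrowth M + logBracketGrowth M ^ 2))

lemma expWeight_add_le {a B M : ℝ} (ha : 0 ≤ a) (haB : a ≤ B) (z v : E) (hv : ‖v‖ ≤ M) :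
    expWeight a (z + v) ≤ expWeightGrowth B M * expWeight a z := by
  have hK : 0 ≤ 2 * logBracketGrowth M + logBracketGrowth M ^ 2 := by
    have := logBracketGrowth_nonneg ((norm_nonneg v).trans hv); positivity
  unfold expWeight expWeightGrowth
  rw [← Real.exp_add, Real.exp_le_exp]
  have := mul_le_mul_of_nonneg_left (logBracket_add_sq_le z v hv) ha
  nlinarith [mul_le_mul_of_nonneg_right haB hK]

lemma norm_smul_le_of_mem_Icc [NormedSpace ℝ E] {M s : ℝ} {y : E} (hy : ‖y‖ ≤ M)
    (hs : s ∈ Icc (0 : ℝ) 1) :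
    ‖s • y‖ ≤ M := by
  rw [norm_smul, Real.norm_of_nonneg hs.1]
  nlinarith [norm_nonneg y, hs.1, hs.2]

end SeminormedAddCommGroup

section InnerProductSpace

open RealInnerProductSpace

variable {E : Type*} [NormedAddCommGroup E] [InnerProductSpace ℝ E]

def logBracketDeriv (z y : E) : ℝ := ⟪z, y⟫ / bracketSq z

def logBracketDeriv2 (z y : E) : ℝ :=
  (‖y‖ ^ 2 * bracketSq z - 2 * ⟪z, y⟫ ^ 2) / bracketSq z ^ 2

def expWeightDeriv (a : ℝ) (z y : E) : ℝ :=
  expWeight a z * (2 * a * logBracket z * logBracketDeriv z y)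

def expWeightDeriv2 (a : ℝ) (z y : E) : ℝ :=
  expWeight a z * ((2 * a * logBracket z * logBracketDeriv z y) ^ 2
    + 2 * a * (logBracketDeriv z y ^ 2 + logBracket z * logBracketDeriv2 z y))

lemma hasDerivAt_line (x y : E) (s : ℝ) : HasDerivAt (fun s : ℝ => x + s • y) y s := by
  simpa using ((hasDerivAt_id s).smul_const y).const_add x

lemma hasDerivAt_bracketSq_line (x y : E) (s : ℝ) :
    HasDerivAt (fun s : ℝ => bracketSq (x + s • y)) (2 * ⟪x + s • y, y⟫) s :=
  ((hasDerivAt_line x y s).norm_sq).add_const 1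

lemma hasDerivAt_inner_line (x y : E) (s : ℝ) :
    HasDerivAt (fun s : ℝ => ⟪x + s • y, y⟫) (‖y‖ ^ 2) s := by
  simpa [real_inner_self_eq_norm_sq] using (hasDerivAt_line x y s).inner ℝ (hasDerivAt_const s y)

lemma hasDerivAt_logBracket_line (x y : E) (s : ℝ) :
    HasDerivAt (fun s : ℝ => logBracket (x + s • y)) (logBracketDeriv (x + s • y) y) s := by
  have h := (((hasDerivAt_bracketSq_line x y s).log (bracketSq_pos _).ne').div_const 2).add_const 1
  exact h.congr_deriv (by unfold logBracketDeriv; ring)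

lemma hasDerivAt_logBracketDeriv_line (x y : E) (s : ℝ) :
    HasDerivAt (fun s : ℝ => logBracketDeriv (x + s • y) y)
      (logBracketDeriv2 (x + s • y) y) s := by
  have h := (hasDerivAt_inner_line x y s).div (hasDerivAt_bracketSq_line x y s)
    (bracketSq_pos _).ne'
  exact h.congr_deriv (by unfold logBracketDeriv2; ring)

lemma hasDerivAt_expWeight_line (a : ℝ) (x y : E) (s : ℝ) :
    HasDerivAt (fun s : ℝ => expWeight a (x + s • y)) (expWeightDeriv a (x + s • y) y) s := by
  have h := (((hasDerivAt_logBracket_line x y s).pow 2).const_mul a).exp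
  exact h.congr_deriv (by simp only [Pi.pow_apply, expWeightDeriv, expWeight]; push_cast; ring)

lemma hasDerivAt_expWeightDeriv_line (a : ℝ) (x y : E) (s : ℝ) :
    HasDerivAt (fun s : ℝ => expWeightDeriv a (x + s • y) y)
      (expWeightDeriv2 a (x + s • y) y) s := by
  have h := (hasDerivAt_expWeight_line a x y s).mul
    (((hasDerivAt_logBracket_line x y s).const_mul (2 * a)).mul
      (hasDerivAt_logBracketDeriv_line x y s))
  exact h.congr_deriv (by simp only [Pi.mul_apply, expWeightDeriv2, expWeightDeriv]; ring)

lemma sq_inner_le_bracketSq_mul (z y : E) : ⟪z, y⟫ ^ 2 ≤ bracketSq z * ‖y‖ ^ 2 := by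
  have h := abs_real_inner_le_norm z y
  have := pow_le_pow_left₀ (abs_nonneg _) h 2
  rw [sq_abs] at this
  unfold bracketSq
  nlinarith [sq_nonneg ‖y‖]

lemma abs_logBracketDeriv_le (z y : E) : |logBracketDeriv z y| ≤ ‖y‖ / √(bracketSq z) := by
  have hw := bracketSq_pos z
  have hinner : |⟪z, y⟫| ≤ √(bracketSq z) * ‖y‖ :=
    (abs_real_inner_le_norm z y).trans (by gcongr; exact norm_le_sqrt_bracketSq z)
  calc |logBracketDeriv z y| = |⟪z, y⟫| / bracketSq z := by
        rw [logBracketDeriv, abs_div, abs_of_pos hw]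
    _ ≤ √(bracketSq z) * ‖y‖ / bracketSq z := by gcongr
    _ = ‖y‖ / √(bracketSq z) := by
        rw [← Real.sq_sqrt hw.le]; field_simp; rw [Real.sqrt_sq (Real.sqrt_nonneg _)]

lemma abs_logBracketDeriv2_le (z y : E) : |logBracketDeriv2 z y| ≤ ‖y‖ ^ 2 / bracketSq z := by
  have hw := bracketSq_pos z
  have h := sq_inner_le_bracketSq_mul z y
  have hnum : |‖y‖ ^ 2 * bracketSq z - 2 * ⟪z, y⟫ ^ 2| ≤ ‖y‖ ^ 2 * bracketSq z := by
    rw [abs_le]; constructor <;> nlinarith [sq_nonneg ⟪z, y⟫]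
  calc |logBracketDeriv2 z y|
        = |‖y‖ ^ 2 * bracketSq z - 2 * ⟪z, y⟫ ^ 2| / bracketSq z ^ 2 := by
        rw [logBracketDeriv2, abs_div, abs_of_pos (pow_pos hw 2)]
    _ ≤ ‖y‖ ^ 2 * bracketSq z / bracketSq z ^ 2 := by gcongr
    _ = ‖y‖ ^ 2 / bracketSq z := by field_simp

lemma abs_expWeightDeriv_le {a : ℝ} (ha : 0 ≤ a) (z y : E) :
    |expWeightDeriv a z y| ≤
      2 * a * expWeight a z * logBracket z * (‖y‖ / √(bracketSq z)) := by
  have hu := logBracket_pos z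
  rw [expWeightDeriv, abs_mul, abs_of_pos (expWeight_pos a z), abs_mul,
    abs_of_nonneg (by positivity : 0 ≤ 2 * a * logBracket z)]
  have := abs_logBracketDeriv_le z y
  have := expWeight_pos a z
  calc _ ≤ expWeight a z * (2 * a * logBracket z * (‖y‖ / √(bracketSq z))) := by gcongr
    _ = _ := by ring

lemma abs_expWeightDeriv2_le {a : ℝ} (ha : 0 ≤ a) (z y : E) :
    |expWeightDeriv2 a z y| ≤
      (4 * a ^ 2 + 4 * a) * expWeight a z * logBracket z ^ 2 * (‖y‖ ^ 2 / bracketSq z) := by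
  have h1 := abs_logBracketDeriv_le z y
  have h2 := abs_logBracketDeriv2_le z y
  have hu := one_le_logBracket z
  have hp : (‖y‖ / √(bracketSq z)) ^ 2 = ‖y‖ ^ 2 / bracketSq z := by
    rw [div_pow, Real.sq_sqrt (bracketSq_pos z).le]
  rw [← hp] at h2 ⊢
  set u := logBracket z
  set p := ‖y‖ / √(bracketSq z)
  set d := logBracketDeriv z y
  have hd : d ^ 2 ≤ p ^ 2 := sq_le_sq' (abs_le.1 h1).1 (abs_le.1 h1).2
  have hpu : p ^ 2 ≤ u ^ 2 * p ^ 2 := le_mul_of_one_le_left (sq_nonneg p) (by nlinarith)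
  have hd2 : |u * logBracketDeriv2 z y| ≤ u ^ 2 * p ^ 2 := by
    rw [abs_mul, abs_of_nonneg (by linarith : 0 ≤ u)]; nlinarith [sq_nonneg p]
  have hsq : (2 * a * u * d) ^ 2 ≤ 4 * a ^ 2 * u ^ 2 * p ^ 2 := by
    have := mul_le_mul_of_nonneg_left hd (by positivity : 0 ≤ 4 * a ^ 2 * u ^ 2); nlinarith
  have hbracket : |(2 * a * u * d) ^ 2 + 2 * a * (d ^ 2 + u * logBracketDeriv2 z y)| ≤
      (4 * a ^ 2 + 4 * a) * u ^ 2 * p ^ 2 := by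
    have hlin := mul_le_mul_of_nonneg_left
      (add_le_add (hd.trans hpu) (abs_le.1 hd2).2) (by positivity : 0 ≤ 2 * a)
    have hlin' := mul_le_mul_of_nonneg_left (abs_le.1 hd2).1 (by positivity : 0 ≤ 2 * a)
    rw [abs_le]; constructor <;>
      nlinarith [sq_nonneg (2 * a * u * d), sq_nonneg d, sq_nonneg (a * u * p), sq_nonneg (u * p)]
  rw [expWeightDeriv2, abs_mul, abs_of_pos (expWeight_pos a z)]
  have := expWeight_pos a z
  calc _ ≤ expWeight a z * ((4 * a ^ 2 + 4 * a) * u ^ 2 * p ^ 2) := by gcongr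
    _ = _ := by ring

lemma abs_expWeightDeriv_add_le {a B M : ℝ} (ha : 0 ≤ a) (haB : a ≤ B) (z v y : E)
    (hv : ‖v‖ ≤ M) :
    |expWeightDeriv a (z + v) y| ≤
      2 * B * (1 + logBracketGrowth M) * √(2 + 2 * M ^ 2)
        * expWeightGrowth B M * expWeight a z * (logBracket z / √(bracketSq z)) * ‖y‖ := by
  have hw : √(bracketSq z) ≤ √(2 + 2 * M ^ 2) * √(bracketSq (z + v)) := by
    rw [← Real.sqrt_mul (by positivity)]
    exact Real.sqrt_le_sqrt (bracketSq_le_mul_bracketSq_add z v hv)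
  have hw' : ‖y‖ / √(bracketSq (z + v)) ≤ √(2 + 2 * M ^ 2) * ‖y‖ / √(bracketSq z) := by
    rw [div_le_div_iff₀ (Real.sqrt_pos.2 (bracketSq_pos _)) (Real.sqrt_pos.2 (bracketSq_pos _))]
    nlinarith [norm_nonneg y]
  have hB : 0 ≤ B := ha.trans haB
  have hK := logBracketGrowth_nonneg ((norm_nonneg v).trans hv)
  have hG : 0 < expWeightGrowth B M := Real.exp_pos _
  have he := expWeight_pos a z
  have he' := expWeight_pos a (z + v)
  have hu := logBracket_pos z
  have hu' := logBracket_pos (z + v)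
  calc |expWeightDeriv a (z + v) y|
      ≤ 2 * a * expWeight a (z + v) * logBracket (z + v) * (‖y‖ / √(bracketSq (z + v))) :=
        abs_expWeightDeriv_le ha (z + v) y
    _ ≤ 2 * B * (expWeightGrowth B M * expWeight a z)
          * ((1 + logBracketGrowth M) * logBracket z)
          * (√(2 + 2 * M ^ 2) * ‖y‖ / √(bracketSq z)) := by
        gcongr
        · exact expWeight_add_le ha haB z v hv
        · exact logBracket_add_le z v hv
    _ = _ := by ring

lemma abs_expWeightDeriv2_add_le {a B M : ℝ} (ha : 0 ≤ a) (haB : a ≤ B) (z v y : E)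
    (hv : ‖v‖ ≤ M) :
    |expWeightDeriv2 a (z + v) y| ≤
      (4 * B ^ 2 + 4 * B) * (1 + logBracketGrowth M) ^ 2 * (2 + 2 * M ^ 2)
        * expWeightGrowth B M * expWeight a z * (logBracket z ^ 2 / bracketSq z) * ‖y‖ ^ 2 := by
  have hw' : ‖y‖ ^ 2 / bracketSq (z + v) ≤ (2 + 2 * M ^ 2) * ‖y‖ ^ 2 / bracketSq z := by
    rw [div_le_div_iff₀ (bracketSq_pos _) (bracketSq_pos _)]
    nlinarith [bracketSq_le_mul_bracketSq_add z v hv, sq_nonneg ‖y‖]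
  have hw := bracketSq_pos (z + v)
  have hB : 0 ≤ B := ha.trans haB
  have hK := logBracketGrowth_nonneg ((norm_nonneg v).trans hv)
  have hG : 0 < expWeightGrowth B M := Real.exp_pos _
  have he := expWeight_pos a z
  have he' := expWeight_pos a (z + v)
  have hu := logBracket_pos z
  have hu' := logBracket_pos (z + v)
  calc |expWeightDeriv2 a (z + v) y|
      ≤ (4 * a ^ 2 + 4 * a) * expWeight a (z + v) * logBracket (z + v) ^ 2
          * (‖y‖ ^ 2 / bracketSq (z + v)) :=
        abs_expWeightDeriv2_le ha (z + v) y
    _ ≤ (4 * B ^ 2 + 4 * B) * (expWeightGrowth B M * expWeight a z)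
          * ((1 + logBracketGrowth M) * logBracket z) ^ 2
          * ((2 + 2 * M ^ 2) * ‖y‖ ^ 2 / bracketSq z) := by
        gcongr
        · exact expWeight_add_le ha haB z v hv
        · exact logBracket_add_le z v hv
    _ = _ := by ring

lemma differentiable_expWeight (a : ℝ) : Differentiable ℝ (expWeight (E := E) a) := by
  intro x
  have h : DifferentiableAt ℝ (fun z : E => ‖z‖ ^ 2) x := differentiableAt_id.norm_sq ℝ
  have := bracketSq_pos x
  unfold expWeight logBracket bracketSq at *
  fun_prop (disch := positivity)

lemma fderiv_expWeight_apply (a : ℝ) (x y : E) :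
    fderiv ℝ (expWeight a) x y = expWeightDeriv a x y := by
  rw [← (differentiable_expWeight a x).lineDeriv_eq_fderiv]
  have h : HasLineDerivAt ℝ (expWeight a) (expWeightDeriv a x y) x y := by
    simpa [HasLineDerivAt] using hasDerivAt_expWeight_line a x y 0
  exact h.lineDeriv

theorem expWeight_sub_sub_fderiv_le {a B M : ℝ} (ha : 0 ≤ a) (haB : a ≤ B) (x y : E)
    (hy : ‖y‖ ≤ M) :
    expWeight a (x + y) - expWeight a x - fderiv ℝ (expWeight a) x y ≤
      (4 * B ^ 2 + 4 * B) * (1 + logBracketGrowth M) ^ 2 * (2 + 2 * M ^ 2)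
        * expWeightGrowth B M * expWeight a x * (logBracket x ^ 2 / bracketSq x) * ‖y‖ ^ 2 := by
  have h := abs_sub_sub_deriv_le_of_abs_deriv2_le
    (fun s _ => hasDerivAt_expWeight_line a x y s)
    (fun s _ => hasDerivAt_expWeightDeriv_line a x y s)
    (fun s hs => abs_expWeightDeriv2_add_le ha haB x (s • y) y (norm_smul_le_of_mem_Icc hy hs))
  rw [fderiv_expWeight_apply]
  simpa using (le_abs_self _).trans h

theorem expWeight_add_sub_le {a B M : ℝ} (ha : 0 ≤ a) (haB : a ≤ B) (x y : E)
    (hy : ‖y‖ ≤ M) :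
    expWeight a (x + y) - expWeight a x ≤
      2 * B * (1 + logBracketGrowth M) * √(2 + 2 * M ^ 2)
        * expWeightGrowth B M * expWeight a x * (logBracket x / √(bracketSq x)) * ‖y‖ := by
  have h := norm_image_sub_le_of_norm_deriv_le_segment_01'
    (fun s _ => (hasDerivAt_expWeight_line a x y s).hasDerivWithinAt)
    (fun s hs => abs_expWeightDeriv_add_le ha haB x (s • y) y
      (norm_smul_le_of_mem_Icc hy (Ico_subset_Icc_self hs)))
  simpa using (le_abs_self _).trans h

end InnerProductSpace

lemma psi_eq_logBracket_sq {n : ℕ} (x : Vec n) : psi x = logBracket x ^ 2 := by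
  rw [psi, logBracket, bracketSq, Real.log_sqrt (by positivity)]

lemma chi_eq_expWeight {n : ℕ} (T A C₁ t : ℝ) :
    chi (n := n) T A C₁ t = expWeight (C₁ * (T - t) + A) := by
  ext x
  rw [chi, expWeight, psi_eq_logBracket_sq]

/-- Increment estimates for `χ`, uniform in `C₁`: for all `Ã > 0` and `M > 0` there
is `C > 0` (depending only on `Ã`, `M` and the dimension) such that for all `T > 0`,
`C₁ > 0`, `t ∈ [max(T − Ã/C₁, 0), T]`, `x ∈ ℝⁿ` and `|y| ≤ M`,
`χ(t,x+y) − χ(t,x) − Dχ(t,x)·y ≤ C χ(t,x) (ψ(x)/(|x|²+1)) |y|²` and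
`χ(t,x+y) − χ(t,x) ≤ C χ(t,x) (ψ(x)^{1/2}/(|x|²+1)^{1/2}) |y|`. -/
theorem chi_increment_bounds (n : ℕ) :
    ∀ A M : ℝ, 0 < A → 0 < M → ∃ C : ℝ, 0 < C ∧
      ∀ T : ℝ, 0 < T → ∀ C₁ : ℝ, 0 < C₁ →
        ∀ t ∈ Icc (max (T - A / C₁) 0) T, ∀ x y : Vec n, ‖y‖ ≤ M →
          chi T A C₁ t (x + y) - chi T A C₁ t x
              - fderiv ℝ (fun z : Vec n => chi T A C₁ t z) x y
            ≤ C * chi T A C₁ t x * (psi x / (‖x‖ ^ 2 + 1)) * ‖y‖ ^ 2 ∧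
          chi T A C₁ t (x + y) - chi T A C₁ t x
            ≤ C * chi T A C₁ t x * (Real.sqrt (psi x) / Real.sqrt (‖x‖ ^ 2 + 1)) * ‖y‖ := by
  intro A M hA hM
  have hK := logBracketGrowth_nonneg hM.le
  have hG : 0 < expWeightGrowth (2 * A) M := Real.exp_pos _
  set Cquad := (4 * (2 * A) ^ 2 + 4 * (2 * A)) * (1 + logBracketGrowth M) ^ 2 * (2 + 2 * M ^ 2)
    * expWeightGrowth (2 * A) M
  set Clin := 2 * (2 * A) * (1 + logBracketGrowth M) * √(2 + 2 * M ^ 2) * expWeightGrowth (2 * A) M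
  refine ⟨Cquad + Clin, by positivity, fun T _ C₁ hC₁ t ht x y hy => ?_⟩
  -- on `[t₁, T]` the weight `a = C₁ (T - t) + A` stays in `[A, 2A]`, whatever `C₁` is
  have ha : 0 ≤ C₁ * (T - t) + A := by nlinarith [ht.2]
  have haB : C₁ * (T - t) + A ≤ 2 * A := by
    have : C₁ * (T - t) ≤ A := by
      rw [mul_comm, ← le_div_iff₀ hC₁]; linarith [(le_max_left _ _).trans ht.1]
    linarith
  have he := expWeight_pos (C₁ * (T - t) + A) x
  have hu := logBracket_pos x
  have hw := bracketSq_pos x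
  rw [chi_eq_expWeight, psi_eq_logBracket_sq, Real.sqrt_sq hu.le]
  change _ ≤ _ * _ * (_ / bracketSq x) * _ ∧ _ ≤ _ * _ * (_ / √(bracketSq x)) * _
  constructor
  · refine (expWeight_sub_sub_fderiv_le ha haB x y hy).trans ?_
    gcongr
    linarith [show 0 ≤ Clin by positivity]
  · refine (expWeight_add_sub_le ha haB x y hy).trans ?_
    gcongr
    linarith [show 0 ≤ Cquad by positivity]

end
end
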